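/- arXiv:1504.08118 — 8 statements merged into one kernel-verified Lean document; each statement's English description precedes it below -/
import Mathlib

section
/- Let f : [0,∞) → (0,∞) be a twice continuously differentiable probability density function such that for every d > 0 the integral ∫₀¹ f(dy)·f(d(1−y)) dy is positive and finite, and suppose the limit L := lim_{x→∞} sign((d²/dx²) log f(x)) exists. Define f_{Z_d}(x) = f(dx)·f(d(1−x)) / ∫₀¹ f(dy)·f(d(1−y)) dy for x ∈ [0,1]. Then f_{Z_d} is eventually in d strictly convex at the point x = 1/2 (that is, there exists d₀ such that f_{Z_d}''(1/2) > 0 for all d > d₀) if and only if L = 1. -/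
/-!
Put `P_d(x) = f(dx) f(d(1-x)) = Q(dx)` with `Q(y) = f(y) f(d - y)`. Since `Q` is symmetric
about `d/2`, the first-order terms cancel and `Q''(d/2) = 2 (f'' f - f'^2)(d/2)
= 2 f(d/2)^2 (log f)''(d/2)`, so `P_d''(1/2) = 2 d^2 f(d/2)^2 (log f)''(d/2)`. As the
normalising integral is positive, `f_{Z_d}''(1/2)` has the sign of `(log f)''(d/2)`, and
eventual positivity of `(log f)''` is the same as its sign tending to `1`, because the sign
only takes the values `-1, 0, 1`.
-/

open MeasureTheory Real Filter Set Topology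

lemma deriv_deriv_comp_mul_left (g : ℝ → ℝ) (a x : ℝ) :
    deriv (deriv fun y => g (a * y)) x = a ^ 2 * deriv (deriv g) (a * x) := by
  have h : deriv (fun y => g (a * y)) = fun y => a * deriv g (a * y) := by
    funext y; exact deriv_comp_mul_left a g y
  rw [h, deriv_const_mul_field, deriv_comp_mul_left, smul_eq_mul]
  ring

section

variable {f : ℝ → ℝ} {c : ℝ}

lemma deriv_deriv_log_comp (hf : ∀ᶠ y in 𝓝 c, DifferentiableAt ℝ f y)
    (hf' : DifferentiableAt ℝ (deriv f) c) (hc : f c ≠ 0) :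
    deriv (deriv fun t => log (f t)) c
      = (deriv (deriv f) c * f c - deriv f c ^ 2) / f c ^ 2 := by
  have hne : ∀ᶠ y in 𝓝 c, f y ≠ 0 := hf.self_of_nhds.continuousAt.eventually_ne hc
  have hlog : deriv (fun t => log (f t)) =ᶠ[𝓝 c] fun y => deriv f y / f y := by
    filter_upwards [hf, hne] with y hy hy0 using deriv.log hy hy0
  rw [hlog.deriv_eq, deriv_fun_div hf' hf.self_of_nhds hc]
  ring

lemma deriv_deriv_mul_comp_reflect (hf : ∀ᶠ y in 𝓝 c, DifferentiableAt ℝ f y)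
    (hf' : DifferentiableAt ℝ (deriv f) c) :
    deriv (deriv fun y => f y * f (2 * c - y)) c
      = 2 * (deriv (deriv f) c * f c - deriv f c ^ 2) := by
  have hcc : 2 * c - c = c := by ring
  have hreflect : Tendsto (fun y => 2 * c - y) (𝓝 c) (𝓝 c) :=
    (continuous_const.sub continuous_id).tendsto' c c hcc
  have hd1 : deriv (fun y => f y * f (2 * c - y)) =ᶠ[𝓝 c]
      fun y => deriv f y * f (2 * c - y) - f y * deriv f (2 * c - y) := by
    filter_upwards [hf, hreflect.eventually hf] with y hy hy'
    have hr : DifferentiableAt ℝ (fun y => f (2 * c - y)) y :=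
      hy'.comp y (differentiableAt_id.const_sub _)
    rw [deriv_fun_mul hy hr, deriv_comp_const_sub]
    ring
  have hfr : DifferentiableAt ℝ (fun y => f (2 * c - y)) c :=
    (hcc.symm ▸ hf.self_of_nhds : DifferentiableAt ℝ f (2 * c - c)).comp c
      (differentiableAt_id.const_sub _)
  have hf'r : DifferentiableAt ℝ (fun y => deriv f (2 * c - y)) c :=
    (hcc.symm ▸ hf' : DifferentiableAt ℝ (deriv f) (2 * c - c)).comp c
      (differentiableAt_id.const_sub _)
  have h1 : DifferentiableAt ℝ (fun y => deriv f y * f (2 * c - y)) c := hf'.mul hfr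
  have h2 : DifferentiableAt ℝ (fun y => f y * deriv f (2 * c - y)) c :=
    hf.self_of_nhds.mul hf'r
  rw [hd1.deriv_eq, deriv_fun_sub h1 h2,
    deriv_fun_mul hf' hfr, deriv_fun_mul hf.self_of_nhds hf'r, deriv_comp_const_sub,
    deriv_comp_const_sub, hcc]
  ring

end

lemma deriv_deriv_mul_comp_half {f : ℝ → ℝ} {d : ℝ}
    (hf : ∀ᶠ y in 𝓝 (d / 2), DifferentiableAt ℝ f y)
    (hf' : DifferentiableAt ℝ (deriv f) (d / 2)) (hfd : f (d / 2) ≠ 0) :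
    deriv (deriv fun x => f (d * x) * f (d * (1 - x))) (1 / 2)
      = 2 * d ^ 2 * f (d / 2) ^ 2 * deriv (deriv fun t => log (f t)) (d / 2) := by
  have hreflect : (fun x => f (d * x) * f (d * (1 - x)))
      = fun x => (fun y => f y * f (2 * (d / 2) - y)) (d * x) := by
    funext x; ring_nf
  rw [hreflect, deriv_deriv_comp_mul_left (fun y => f y * f (2 * (d / 2) - y)),
    show d * (1 / 2) = d / 2 by ring,
    deriv_deriv_mul_comp_reflect hf hf', deriv_deriv_log_comp hf hf' hfd]
  field_simp

lemma eventually_pos_iff_of_tendsto_sign {α : Type*} {l : Filter α} [l.NeBot] {h : α → ℝ}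
    {L : ℝ} (hL : Tendsto (fun x => sign (h x)) l (𝓝 L)) :
    (∀ᶠ x in l, 0 < h x) ↔ L = 1 := by
  constructor
  · intro hpos
    exact tendsto_nhds_unique hL
      (tendsto_const_nhds.congr' (hpos.mono fun x hx => (sign_of_pos hx).symm))
  · rintro rfl
    filter_upwards [hL.eventually (eventually_gt_nhds one_half_lt_one)] with x hx
    rcases lt_trichotomy (h x) 0 with hneg | hzero | hpos
    · rw [sign_of_neg hneg] at hx; norm_num at hx
    · rw [hzero, sign_zero] at hx; norm_num at hx
    · exact hpos

theorem stmt_1_general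
    (f : ℝ → ℝ)
    (hpos : ∀ x, 0 ≤ x → 0 < f x)
    (hsmooth : ContDiffOn ℝ 2 f (Set.Ici (0 : ℝ)))
    (hintpos : ∀ d > (0 : ℝ), 0 < ∫ y in (0 : ℝ)..1, f (d * y) * f (d * (1 - y)))
    (L : ℝ)
    (hL : Filter.Tendsto
      (fun x => Real.sign (deriv (deriv (fun t => Real.log (f t))) x))
      Filter.atTop (nhds L))
    (fZ : ℝ → ℝ → ℝ)
    (hfZ : ∀ d x, fZ d x =
      f (d * x) * f (d * (1 - x)) / ∫ y in (0 : ℝ)..1, f (d * y) * f (d * (1 - y))) :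
    (∃ d₀ : ℝ, ∀ d > d₀, 0 < deriv (deriv (fZ d)) (1 / 2)) ↔ L = 1 := by
  have hdiff : ∀ c > (0 : ℝ), DifferentiableAt ℝ f c := fun c hc =>
    (hsmooth.differentiableOn (by norm_num)).differentiableAt (Ici_mem_nhds hc)
  have hdiff' : ∀ c > (0 : ℝ), DifferentiableAt ℝ (deriv f) c := fun c hc =>
    (((hsmooth.mono Ioi_subset_Ici_self).deriv_of_isOpen isOpen_Ioi (m := 1) (by norm_num)
      ).differentiableOn (by norm_num)).differentiableAt (Ioi_mem_nhds hc)
  have hconvex_iff : ∀ d > (0 : ℝ), 0 < deriv (deriv (fZ d)) (1 / 2) ↔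
      0 < deriv (deriv fun t => log (f t)) (d / 2) := by
    intro d hd
    have hd2 : 0 < d / 2 := by positivity
    have hfd : 0 < f (d / 2) := hpos _ hd2.le
    have hfZd : fZ d = fun x => f (d * x) * f (d * (1 - x))
        / ∫ y in (0 : ℝ)..1, f (d * y) * f (d * (1 - y)) := funext (hfZ d)
    have hderiv : deriv (fZ d) = fun x => deriv (fun x => f (d * x) * f (d * (1 - x))) x
        / ∫ y in (0 : ℝ)..1, f (d * y) * f (d * (1 - y)) := by
      funext x; rw [hfZd, deriv_div_const]
    rw [hderiv, deriv_div_const, div_pos_iff_of_pos_right (hintpos d hd),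
      deriv_deriv_mul_comp_half (eventually_gt_nhds hd2 |>.mono hdiff) (hdiff' _ hd2)
        hfd.ne']
    exact mul_pos_iff_of_pos_left (by positivity)
  rw [← eventually_pos_iff_of_tendsto_sign
      (h := fun d => deriv (deriv fun t => log (f t)) (d / 2))
      (hL.comp (tendsto_id.atTop_div_const two_pos)),
    ← eventually_congr ((eventually_gt_atTop 0).mono hconvex_iff),
    atTop_basis_Ioi.eventually_iff]
  simp only [true_and, mem_Ioi]

/-- If `L := lim_{x→∞} sign((log f)''(x))` exists, then `f_{Z_d}` is
eventually in `d` strictly convex at `x = 1/2` iff `L = 1`. -/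
theorem stmt_1
    (f : ℝ → ℝ)
    (hpos : ∀ x, 0 ≤ x → 0 < f x)
    (hsmooth : ContDiffOn ℝ 2 f (Set.Ici (0 : ℝ)))
    (hdens : ∫ x in Set.Ici (0 : ℝ), f x = 1)
    (hint : ∀ d > (0 : ℝ),
      IntervalIntegrable (fun y => f (d * y) * f (d * (1 - y))) volume 0 1)
    (hintpos : ∀ d > (0 : ℝ), 0 < ∫ y in (0 : ℝ)..1, f (d * y) * f (d * (1 - y)))
    (L : ℝ)
    (hL : Filter.Tendsto
      (fun x => Real.sign (deriv (deriv (fun t => Real.log (f t))) x))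
      Filter.atTop (nhds L))
    (fZ : ℝ → ℝ → ℝ)
    (hfZ : ∀ d x, fZ d x =
      f (d * x) * f (d * (1 - x)) / ∫ y in (0 : ℝ)..1, f (d * y) * f (d * (1 - y))) :
    (∃ d₀ : ℝ, ∀ d > d₀, 0 < deriv (deriv (fZ d)) (1 / 2)) ↔ L = 1 :=
  stmt_1_general f hpos hsmooth hintpos L hL fZ hfZ
end

section
/- Let f : [0,∞) → (0,∞) be a twice continuously differentiable probability density function such that for every d > 0 the integral ∫₀¹ f(dy)·f(d(1−y)) dy is positive and finite, and suppose the limit L := lim_{x→∞} sign((d²/dx²) log f(x)) exists. Define f_{Z_d}(x) = f(dx)·f(d(1−x)) / ∫₀¹ f(dy)·f(d(1−y)) dy for x ∈ [0,1]. Then f_{Z_d} is eventually in d strictly concave at the point x = 1/2 (that is, there exists d₀ such that f_{Z_d}''(1/2) < 0 for all d > d₀) if and only if L = −1. -/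
/-!
The two factors of `f (d x) f (d (1 - x))` meet at `x = 1/2`, where the cross terms combine to
`f_{Z_d}''(1/2) = 2 d² (f f'' - f'²)(d/2) / C_d` with `C_d > 0` the normalising integral. Since
`f f'' - f'² = f² (log f)''`, strict concavity of `f_{Z_d}` at `1/2` is equivalent to
`(log f)''(d/2) < 0`. So eventual concavity in `d` means `(log f)''` is eventually negative, and as
`sign ((log f)'')` converges to `L`, this happens exactly when `L = -1`.
-/

open MeasureTheory Real Filter Set

theorem Real.sign_lt_zero_iff {r : ℝ} : sign r < 0 ↔ r < 0 := by
  refine ⟨fun h => ?_, fun h => by norm_num [sign_of_neg h]⟩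
  rcases lt_trichotomy r 0 with hr | rfl | hr
  · exact hr
  · norm_num [sign_zero] at h
  · norm_num [sign_of_pos hr] at h

theorem eventually_neg_iff_of_tendsto_sign {α : Type*} {l : Filter α} [l.NeBot] {g : α → ℝ}
    {L : ℝ} (hL : Tendsto (fun x => sign (g x)) l (nhds L)) :
    (∀ᶠ x in l, g x < 0) ↔ L = -1 := by
  constructor
  · intro hg
    refine tendsto_nhds_unique hL (tendsto_const_nhds.congr' ?_)
    filter_upwards [hg] with x hx using (sign_of_neg hx).symm
  · rintro rfl
    filter_upwards [hL.eventually_lt_const (by norm_num : (-1 : ℝ) < 0)] with x hx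
    exact Real.sign_lt_zero_iff.1 hx

section SecondDerivatives

variable {f : ℝ → ℝ} {s : Set ℝ} {t : ℝ}

theorem ContDiffOn.hasDerivAt_deriv_of_isOpen {n : WithTop ℕ∞} (hf : ContDiffOn ℝ n f s)
    (hs : IsOpen s) (hn : n ≠ 0) (ht : t ∈ s) : HasDerivAt f (deriv f t) t :=
  ((hf.contDiffAt (hs.mem_nhds ht)).differentiableAt hn).hasDerivAt

theorem ContDiffOn.hasDerivAt_deriv_deriv_of_isOpen (hf : ContDiffOn ℝ 2 f s) (hs : IsOpen s)
    (ht : t ∈ s) : HasDerivAt (deriv f) (deriv (deriv f) t) t :=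
  (hf.deriv_of_isOpen hs (by norm_num : (1 : WithTop ℕ∞) + 1 ≤ 2)).hasDerivAt_deriv_of_isOpen
    hs one_ne_zero ht

theorem deriv_deriv_log_of_isOpen (hf : ContDiffOn ℝ 2 f s) (hs : IsOpen s)
    (hf0 : ∀ x ∈ s, f x ≠ 0) (ht : t ∈ s) :
    deriv (deriv fun x => log (f x)) t =
      (f t * deriv (deriv f) t - deriv f t ^ 2) / f t ^ 2 := by
  have hlog : deriv (fun x => log (f x)) =ᶠ[nhds t] fun x => deriv f x / f x := by
    filter_upwards [hs.mem_nhds ht] with x hx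
    exact ((hf.hasDerivAt_deriv_of_isOpen hs two_ne_zero hx).log (hf0 x hx)).deriv
  have hquot : HasDerivAt (fun x => deriv f x / f x)
      ((deriv (deriv f) t * f t - deriv f t * deriv f t) / f t ^ 2) t :=
    (hf.hasDerivAt_deriv_deriv_of_isOpen hs ht).div
      (hf.hasDerivAt_deriv_of_isOpen hs two_ne_zero ht) (hf0 t ht)
  rw [hlog.deriv_eq, hquot.deriv]
  ring

theorem deriv_deriv_mul_comp_one_sub (hf : ContDiffOn ℝ 2 f s) (hs : IsOpen s) (d : ℝ) {x : ℝ}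
    (hx : d * x ∈ s) (hx' : d * (1 - x) ∈ s) :
    deriv (deriv fun y => f (d * y) * f (d * (1 - y))) x =
      d ^ 2 * (deriv (deriv f) (d * x) * f (d * (1 - x))
        - 2 * deriv f (d * x) * deriv f (d * (1 - x))
        + f (d * x) * deriv (deriv f) (d * (1 - x))) := by
  have comp {φ : ℝ → ℝ} {φ' y : ℝ} (h : HasDerivAt φ φ' (d * y)) :
      HasDerivAt (fun y => φ (d * y)) (φ' * d) y :=
    (h.comp y ((hasDerivAt_id y).const_mul d)).congr_deriv (by ring)
  have comp_one_sub {φ : ℝ → ℝ} {φ' y : ℝ} (h : HasDerivAt φ φ' (d * (1 - y))) :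
      HasDerivAt (fun y => φ (d * (1 - y))) (-(φ' * d)) y :=
    (h.comp y (((hasDerivAt_id y).const_sub 1).const_mul d)).congr_deriv (by ring)
  have hD1 := fun t (ht : t ∈ s) => hf.hasDerivAt_deriv_of_isOpen hs two_ne_zero ht
  have hD2 := fun t (ht : t ∈ s) => hf.hasDerivAt_deriv_deriv_of_isOpen hs ht
  have hU : IsOpen {y | d * y ∈ s ∧ d * (1 - y) ∈ s} :=
    (hs.preimage (by fun_prop)).inter (hs.preimage (by fun_prop))
  have hfirst : deriv (fun y => f (d * y) * f (d * (1 - y))) =ᶠ[nhds x]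
      fun y => d * (deriv f (d * y) * f (d * (1 - y)) - f (d * y) * deriv f (d * (1 - y))) := by
    filter_upwards [hU.mem_nhds ⟨hx, hx'⟩] with y ⟨hy, hy'⟩
    exact ((comp (hD1 _ hy)).mul (comp_one_sub (hD1 _ hy'))).deriv.trans (by ring)
  rw [hfirst.deriv_eq]
  refine ((((comp (hD2 _ hx)).mul (comp_one_sub (hD1 _ hx'))).sub
    ((comp (hD1 _ hx)).mul (comp_one_sub (hD2 _ hx')))).const_mul d).deriv.trans ?_
  ring

theorem deriv_deriv_mul_comp_one_sub_half (hf : ContDiffOn ℝ 2 f s)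
    (hs : IsOpen s) {d : ℝ} (hd : d / 2 ∈ s) :
    deriv (deriv fun y => f (d * y) * f (d * (1 - y))) (1 / 2) =
      2 * d ^ 2 * (f (d / 2) * deriv (deriv f) (d / 2) - deriv f (d / 2) ^ 2) := by
  have hhalf : d * (1 / 2) = d / 2 := by ring
  have hhalf' : d * (1 - 1 / 2) = d / 2 := by ring
  rw [deriv_deriv_mul_comp_one_sub hf hs d (hhalf ▸ hd) (hhalf' ▸ hd), hhalf, hhalf']
  ring

end SecondDerivatives

theorem stmt_2_general
    (f : ℝ → ℝ)
    (hpos : ∀ x, 0 ≤ x → 0 < f x)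
    (hsmooth : ContDiffOn ℝ 2 f (Set.Ici (0 : ℝ)))
    (hintpos : ∀ d > (0 : ℝ), 0 < ∫ y in (0 : ℝ)..1, f (d * y) * f (d * (1 - y)))
    (L : ℝ)
    (hL : Filter.Tendsto
      (fun x => Real.sign (deriv (deriv (fun t => Real.log (f t))) x))
      Filter.atTop (nhds L))
    (fZ : ℝ → ℝ → ℝ)
    (hfZ : ∀ d x, fZ d x =
      f (d * x) * f (d * (1 - x)) / ∫ y in (0 : ℝ)..1, f (d * y) * f (d * (1 - y))) :
    (∃ d₀ : ℝ, ∀ d > d₀, deriv (deriv (fZ d)) (1 / 2) < 0) ↔ L = -1 := by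
  have hf : ContDiffOn ℝ 2 f (Ioi 0) := hsmooth.mono Ioi_subset_Ici_self
  have hf0 : ∀ x ∈ Ioi (0 : ℝ), f x ≠ 0 := fun x hx => (hpos x (le_of_lt hx)).ne'
  have key : ∀ d > 0, deriv (deriv (fZ d)) (1 / 2) < 0 ↔
      deriv (deriv fun t => log (f t)) (d / 2) < 0 := by
    intro d hd
    have hd2 : d / 2 ∈ Ioi (0 : ℝ) := half_pos hd
    have hderiv : deriv (fZ d) = fun x => deriv (fun y => f (d * y) * f (d * (1 - y))) x /
        ∫ y in (0 : ℝ)..1, f (d * y) * f (d * (1 - y)) :=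
      funext fun x => by rw [funext (hfZ d), deriv_div_const]
    rw [hderiv, deriv_div_const, deriv_deriv_mul_comp_one_sub_half hf isOpen_Ioi hd2,
      deriv_deriv_log_of_isOpen hf isOpen_Ioi hf0 hd2, div_lt_iff₀ (hintpos d hd),
      div_lt_iff₀ (pow_pos (hpos _ (le_of_lt hd2)) 2), zero_mul, zero_mul]
    have h2d : 0 < 2 * d ^ 2 := by positivity
    exact ⟨fun h => neg_of_mul_neg_right h h2d.le, mul_neg_of_pos_of_neg h2d⟩
  calc (∃ d₀ : ℝ, ∀ d > d₀, deriv (deriv (fZ d)) (1 / 2) < 0)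
      ↔ ∀ᶠ d in atTop, deriv (deriv (fZ d)) (1 / 2) < 0 := by
        simp [atTop_basis_Ioi.eventually_iff]
    _ ↔ ∀ᶠ d in atTop, deriv (deriv fun t => log (f t)) (d / 2) < 0 :=
      eventually_congr ((eventually_gt_atTop 0).mono key)
    _ ↔ ∀ᶠ t in atTop, deriv (deriv fun t => log (f t)) t < 0 := by
      conv_rhs => rw [← map_div_atTop_eq (2 : ℝ) two_pos, eventually_map]
    _ ↔ L = -1 := eventually_neg_iff_of_tendsto_sign hL

/-- If `L := lim_{x→∞} sign((log f)''(x))` exists, then `f_{Z_d}` is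
eventually in `d` strictly concave at `x = 1/2` iff `L = -1`. -/
theorem stmt_2
    (f : ℝ → ℝ)
    (hpos : ∀ x, 0 ≤ x → 0 < f x)
    (hsmooth : ContDiffOn ℝ 2 f (Set.Ici (0 : ℝ)))
    (hdens : ∫ x in Set.Ici (0 : ℝ), f x = 1)
    (hint : ∀ d > (0 : ℝ),
      IntervalIntegrable (fun y => f (d * y) * f (d * (1 - y))) volume 0 1)
    (hintpos : ∀ d > (0 : ℝ), 0 < ∫ y in (0 : ℝ)..1, f (d * y) * f (d * (1 - y)))
    (L : ℝ)
    (hL : Filter.Tendsto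
      (fun x => Real.sign (deriv (deriv (fun t => Real.log (f t))) x))
      Filter.atTop (nhds L))
    (fZ : ℝ → ℝ → ℝ)
    (hfZ : ∀ d x, fZ d x =
      f (d * x) * f (d * (1 - x)) / ∫ y in (0 : ℝ)..1, f (d * y) * f (d * (1 - y))) :
    (∃ d₀ : ℝ, ∀ d > d₀, deriv (deriv (fZ d)) (1 / 2) < 0) ↔ L = -1 :=
  stmt_2_general f hpos hsmooth hintpos L hL fZ hfZ
end

section
/- Let f : [0,∞) → (0,∞) be a twice continuously differentiable probability density function such that for every d > 0 the integral ∫₀¹ f(dy)·f(d(1−y)) dy is positive and finite, and suppose there exists x₀ > 0 such that the function x ↦ f'(x)/f(x) is strictly decreasing on (x₀,∞). Define f_{Z_d}(x) = f(dx)·f(d(1−x)) / ∫₀¹ f(dy)·f(d(1−y)) dy for x ∈ [0,1]. Then for every d > 2x₀ with f_{Z_d}''(1/2) < 0, the function f_{Z_d} is monotone increasing on the interval [x₀/d, 1/2], has no critical point in (x₀/d, 1/2), and attains a local maximum at x = 1/2. -/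
/-!
The unnormalized density `g(x) = f(dx) f(d(1-x))` has derivative
`d · f(dx) f(d(1-x)) · (f'/f (dx) - f'/f (d(1-x)))`. For `x₀/d < x < 1/2` both arguments exceed `x₀`
and `dx < d(1-x)`, so strict decrease of `f'/f` makes this positive. Hence `g`, and so `f_{Z_d}`, is
strictly increasing on `[x₀/d, 1/2]`; being symmetric about `1/2`, it has a local maximum there.
-/

open MeasureTheory Real Filter Set

/-- The numerator of `f_{Z_d}(x)`, i.e. `f_{Z_d} = splitProduct f d / ∫₀¹ splitProduct f d`. -/
def splitProduct (f : ℝ → ℝ) (d x : ℝ) : ℝ := f (d * x) * f (d * (1 - x))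

lemma splitProduct_one_sub (f : ℝ → ℝ) (d x : ℝ) :
    splitProduct f d (1 - x) = splitProduct f d x := by
  simp only [splitProduct, sub_sub_cancel, mul_comm]

lemma hasDerivAt_splitProduct {f : ℝ → ℝ} {d x : ℝ} (ha : DifferentiableAt ℝ f (d * x))
    (hb : DifferentiableAt ℝ f (d * (1 - x))) :
    HasDerivAt (splitProduct f d)
      (d * (deriv f (d * x) * f (d * (1 - x)) - f (d * x) * deriv f (d * (1 - x)))) x := by
  have hl : HasDerivAt (fun x => f (d * x)) (deriv f (d * x) * (d * 1)) x :=
    ha.hasDerivAt.comp x ((hasDerivAt_id x).const_mul d)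
  have hr : HasDerivAt (fun x => f (d * (1 - x))) (deriv f (d * (1 - x)) * (d * -1)) x :=
    hb.hasDerivAt.comp x (((hasDerivAt_id x).const_sub 1).const_mul d)
  exact (hl.mul hr).congr_deriv (by ring)

lemma mul_sub_mul_pos_of_strictAntiOn_deriv_div {f : ℝ → ℝ} {x₀ a b : ℝ}
    (hdec : StrictAntiOn (fun x => deriv f x / f x) (Ioi x₀)) (ha : x₀ < a) (hab : a < b)
    (hfa : 0 < f a) (hfb : 0 < f b) : 0 < deriv f a * f b - f a * deriv f b := by
  have h : deriv f b / f b < deriv f a / f a := hdec ha (ha.trans hab) hab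
  rw [div_lt_div_iff₀ hfb hfa] at h
  linarith

section Monotone

variable {f : ℝ → ℝ} {x₀ d : ℝ}

lemma le_mul_and_mul_le_mul_one_sub (hd : 0 < d) {x : ℝ} (hx : x ∈ Icc (x₀ / d) (1 / 2)) :
    x₀ ≤ d * x ∧ d * x ≤ d * (1 - x) := by
  rw [mem_Icc, div_le_iff₀ hd] at hx
  constructor <;> nlinarith

lemma lt_mul_and_mul_lt_mul_one_sub (hd : 0 < d) {x : ℝ} (hx : x ∈ Ioo (x₀ / d) (1 / 2)) :
    x₀ < d * x ∧ d * x < d * (1 - x) := by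
  rw [mem_Ioo, div_lt_iff₀ hd] at hx
  constructor <;> nlinarith

lemma deriv_splitProduct_pos (hdiff : ∀ a, x₀ ≤ a → DifferentiableAt ℝ f a)
    (hpos : ∀ a, x₀ ≤ a → 0 < f a) (hdec : StrictAntiOn (fun x => deriv f x / f x) (Ioi x₀))
    (hd : 0 < d) {x : ℝ} (hx : x ∈ Ioo (x₀ / d) (1 / 2)) : 0 < deriv (splitProduct f d) x := by
  obtain ⟨hx₀, hlt⟩ := lt_mul_and_mul_lt_mul_one_sub hd hx
  rw [(hasDerivAt_splitProduct (hdiff _ hx₀.le) (hdiff _ (hx₀.trans hlt).le)).deriv]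
  exact mul_pos hd <| mul_sub_mul_pos_of_strictAntiOn_deriv_div hdec hx₀ hlt
    (hpos _ hx₀.le) (hpos _ (hx₀.trans hlt).le)

lemma strictMonoOn_splitProduct (hdiff : ∀ a, x₀ ≤ a → DifferentiableAt ℝ f a)
    (hpos : ∀ a, x₀ ≤ a → 0 < f a) (hdec : StrictAntiOn (fun x => deriv f x / f x) (Ioi x₀))
    (hd : 0 < d) : StrictMonoOn (splitProduct f d) (Icc (x₀ / d) (1 / 2)) := by
  refine strictMonoOn_of_deriv_pos (convex_Icc _ _) (fun x hx => ?_) (fun x hx => ?_)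
  · obtain ⟨hx₀, hle⟩ := le_mul_and_mul_le_mul_one_sub hd hx
    exact (hasDerivAt_splitProduct (hdiff _ hx₀) (hdiff _ (hx₀.trans hle))
      |>.continuousAt).continuousWithinAt
  · rw [interior_Icc] at hx
    exact deriv_splitProduct_pos hdiff hpos hdec hd hx

end Monotone

lemma isLocalMax_of_symm_of_monotoneOn {g : ℝ → ℝ} {a c : ℝ} (hsymm : ∀ x, g (2 * c - x) = g x)
    (hmono : MonotoneOn g (Icc a c)) (hac : a < c) : IsLocalMax g c := by
  filter_upwards [Ioo_mem_nhds hac (show c < 2 * c - a by linarith)] with x hx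
  rcases le_or_gt x c with h | h
  · exact hmono ⟨hx.1.le, h⟩ ⟨hac.le, le_rfl⟩ h
  · rw [← hsymm x]
    exact hmono ⟨by linarith [hx.2], by linarith⟩ ⟨hac.le, le_rfl⟩ (by linarith)

theorem stmt_9_general
    (f : ℝ → ℝ)
    (hpos : ∀ x, 0 ≤ x → 0 < f x)
    (hsmooth : ContDiffOn ℝ 2 f (Set.Ici (0 : ℝ)))
    (hintpos : ∀ d > (0 : ℝ), 0 < ∫ y in (0 : ℝ)..1, f (d * y) * f (d * (1 - y)))
    (x₀ : ℝ) (hx₀ : 0 < x₀)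
    (hdec : StrictAntiOn (fun x => deriv f x / f x) (Set.Ioi x₀))
    (fZ : ℝ → ℝ → ℝ)
    (hfZ : ∀ d x, fZ d x =
      f (d * x) * f (d * (1 - x)) / ∫ y in (0 : ℝ)..1, f (d * y) * f (d * (1 - y))) :
    ∀ d : ℝ, 2 * x₀ < d → deriv (deriv (fZ d)) (1 / 2) < 0 →
      MonotoneOn (fZ d) (Set.Icc (x₀ / d) (1 / 2)) ∧
      (∀ x ∈ Set.Ioo (x₀ / d) (1 / 2), deriv (fZ d) x ≠ 0) ∧
      IsLocalMax (fZ d) (1 / 2) := by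
  intro d hd _
  have hd0 : 0 < d := by linarith
  set C := ∫ y in (0 : ℝ)..1, f (d * y) * f (d * (1 - y))
  have hC : 0 < C := hintpos d hd0
  have hfZd : fZ d = fun x => splitProduct f d x / C := funext (hfZ d)
  have hdiff : ∀ a, x₀ ≤ a → DifferentiableAt ℝ f a := fun a ha =>
    (hsmooth.contDiffAt (Ici_mem_nhds (hx₀.trans_le ha))).differentiableAt (by norm_num)
  have hpos' : ∀ a, x₀ ≤ a → 0 < f a := fun a ha => hpos a (hx₀.le.trans ha)
  have hmono : MonotoneOn (fZ d) (Icc (x₀ / d) (1 / 2)) := by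
    rw [hfZd]
    exact fun a ha b hb hab => div_le_div_of_nonneg_right
      ((strictMonoOn_splitProduct hdiff hpos' hdec hd0).monotoneOn ha hb hab) hC.le
  refine ⟨hmono, fun x hx => ?_, ?_⟩
  · rw [hfZd, deriv_div_const]
    exact div_ne_zero (deriv_splitProduct_pos hdiff hpos' hdec hd0 hx).ne' hC.ne'
  · refine isLocalMax_of_symm_of_monotoneOn (fun x => ?_) hmono ?_
    · rw [hfZd]; norm_num [splitProduct_one_sub]
    · rw [div_lt_iff₀ hd0]; linarith

/-- If `f'/f` is strictly decreasing on `(x₀,∞)`, then for every `d > 2x₀`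
with `f_{Z_d}''(1/2) < 0`, the density `f_{Z_d}` is monotone increasing on `[x₀/d, 1/2]`,
has no critical point in `(x₀/d, 1/2)`, and has a local maximum at `x = 1/2`. -/
theorem stmt_9
    (f : ℝ → ℝ)
    (hpos : ∀ x, 0 ≤ x → 0 < f x)
    (hsmooth : ContDiffOn ℝ 2 f (Set.Ici (0 : ℝ)))
    (hdens : ∫ x in Set.Ici (0 : ℝ), f x = 1)
    (hint : ∀ d > (0 : ℝ),
      IntervalIntegrable (fun y => f (d * y) * f (d * (1 - y))) volume 0 1)
    (hintpos : ∀ d > (0 : ℝ), 0 < ∫ y in (0 : ℝ)..1, f (d * y) * f (d * (1 - y)))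
    (x₀ : ℝ) (hx₀ : 0 < x₀)
    (hdec : StrictAntiOn (fun x => deriv f x / f x) (Set.Ioi x₀))
    (fZ : ℝ → ℝ → ℝ)
    (hfZ : ∀ d x, fZ d x =
      f (d * x) * f (d * (1 - x)) / ∫ y in (0 : ℝ)..1, f (d * y) * f (d * (1 - y))) :
    ∀ d : ℝ, 2 * x₀ < d → deriv (deriv (fZ d)) (1 / 2) < 0 →
      MonotoneOn (fZ d) (Set.Icc (x₀ / d) (1 / 2)) ∧
      (∀ x ∈ Set.Ioo (x₀ / d) (1 / 2), deriv (fZ d) x ≠ 0) ∧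
      IsLocalMax (fZ d) (1 / 2) :=
  stmt_9_general f hpos hsmooth hintpos x₀ hx₀ hdec fZ hfZ
end

section
/- Let f : [0,∞) → (0,∞) be a twice continuously differentiable, eventually decreasing probability density function such that for every d > 0 the integral ∫₀¹ f(dy)·f(d(1−y)) dy is positive and finite, and suppose there exists x₀ > 0 such that x ↦ f'(x)/f(x) is strictly decreasing on (x₀,∞). Define f_{Z_d}(x) = f(dx)·f(d(1−x)) / ∫₀¹ f(dy)·f(d(1−y)) dy for x ∈ [0,1], and assume f_{Z_d}(x) → 0 as d → ∞ for every x ∈ (0,1/2). Then for every c ∈ (0,1/2), f_{Z_d} → 0 uniformly on [0,c] as d → ∞. -/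
/-!
Write `g_d u = f u * f (d - u)`, so that `f_{Z_d} x = g_d (d x) / I_d`. Since `f'/f` decreases
beyond `x₀`, `g_d` increases on `[x₀, d/2]`; on `[0, x₀]` the factor `f u` is bounded while
`f (d - u) ≤ f (d - 2x₀)` once `f` decreases, so `g_d ≤ K g_d (2x₀)` there. Hence
`f_{Z_d} ≤ K f_{Z_d} c` on `[0, c]` for large `d`, and the convergence at the single point `c`
is uniform on `[0, c]`.
-/

open MeasureTheory Real Filter Set Topology

theorem strictMonoOn_mul_comp_sub {f : ℝ → ℝ} {a : ℝ} (hcont : ContinuousOn f (Ici a))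
    (hdiff : DifferentiableOn ℝ f (Ioi a)) (hpos : ∀ u > a, 0 < f u)
    (hdec : StrictAntiOn (fun u => deriv f u / f u) (Ioi a)) (s : ℝ) :
    StrictMonoOn (fun u => f u * f (s - u)) (Icc a (s / 2)) := by
  apply strictMonoOn_of_deriv_pos (convex_Icc _ _)
  · refine (hcont.mono fun u hu => hu.1).mul (hcont.comp (by fun_prop) fun u hu => ?_)
    simp only [mem_Ici]
    linarith [hu.1, hu.2]
  · intro u hu
    rw [interior_Icc] at hu
    obtain ⟨hau, hus⟩ := hu
    have hasu : a < s - u := by linarith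
    have hdu := (hdiff.differentiableAt (Ioi_mem_nhds hau)).hasDerivAt
    have hdsu : HasDerivAt (fun u => f (s - u)) (deriv f (s - u) * -1) u :=
      (hdiff.differentiableAt (Ioi_mem_nhds hasu)).hasDerivAt.comp u
        ((hasDerivAt_id u).const_sub s)
    rw [(hdu.fun_mul hdsu).deriv]
    have hlog := hdec (mem_Ioi.2 hau) (mem_Ioi.2 hasu) (by linarith)
    simp only at hlog
    rw [div_lt_div_iff₀ (hpos _ hasu) (hpos _ hau)] at hlog
    linarith

theorem exists_mul_comp_sub_le_of_antitoneOn {f : ℝ → ℝ} {a y₀ : ℝ} (ha : 0 ≤ a)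
    (hcont : ContinuousOn f (Icc 0 a)) (hpos : ∀ u, 0 ≤ u → 0 < f u)
    (hanti : AntitoneOn f (Ici y₀)) :
    ∃ K, ∀ᶠ s in atTop, ∀ u ∈ Icc 0 a,
      f u * f (s - u) ≤ K * (f (2 * a) * f (s - 2 * a)) := by
  obtain ⟨M, hM⟩ := isCompact_Icc.exists_bound_of_continuousOn hcont
  have hf2a : 0 < f (2 * a) := hpos _ (by positivity)
  refine ⟨M / f (2 * a), ?_⟩
  filter_upwards [eventually_ge_atTop (max y₀ 0 + 2 * a)] with s hs u hu
  have hy₀ := le_max_left y₀ 0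
  have h0 := le_max_right y₀ 0
  have hfu : f u ≤ M := (le_abs_self _).trans (hM u hu)
  calc f u * f (s - u) ≤ M * f (s - u) :=
        mul_le_mul_of_nonneg_right hfu (hpos _ (by linarith [hu.2])).le
    _ ≤ M * f (s - 2 * a) :=
        mul_le_mul_of_nonneg_left (hanti (by simp only [mem_Ici]; linarith)
          (by simp only [mem_Ici]; linarith [hu.2]) (by linarith [hu.2]))
          ((hpos _ hu.1).le.trans hfu)
    _ = M / f (2 * a) * (f (2 * a) * f (s - 2 * a)) := by field_simp

theorem exists_mul_comp_sub_le_mul_comp_sub {f : ℝ → ℝ} {a y₀ : ℝ} (ha : 0 ≤ a)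
    (hcont : ContinuousOn f (Ici 0)) (hdiff : DifferentiableOn ℝ f (Ioi a))
    (hpos : ∀ u, 0 ≤ u → 0 < f u) (hanti : AntitoneOn f (Ici y₀))
    (hdec : StrictAntiOn (fun u => deriv f u / f u) (Ioi a)) :
    ∃ K, ∀ᶠ s in atTop, ∀ t ∈ Icc (2 * a) (s / 2), ∀ u ∈ Icc 0 t,
      f u * f (s - u) ≤ K * (f t * f (s - t)) := by
  obtain ⟨K, hK⟩ := exists_mul_comp_sub_le_of_antitoneOn ha (hcont.mono Icc_subset_Ici_self)
    hpos hanti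
  refine ⟨max 1 K, ?_⟩
  filter_upwards [hK] with s hKs t ht u hu
  have hmono := strictMonoOn_mul_comp_sub (hcont.mono (Ici_subset_Ici.2 ha))
    hdiff (fun u hu => hpos u (ha.trans hu.le)) hdec s
  have hnonneg : ∀ v ∈ Icc 0 (s / 2), 0 ≤ f v * f (s - v) := fun v hv =>
    mul_nonneg (hpos v hv.1).le (hpos _ (by linarith [hv.1, hv.2])).le
  have htmem : t ∈ Icc a (s / 2) := ⟨by linarith [ht.1], ht.2⟩
  have ht_nonneg := hnonneg t ⟨by linarith [ht.1], ht.2⟩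
  rcases le_total a u with hau | hua
  · calc f u * f (s - u) ≤ f t * f (s - t) :=
          hmono.monotoneOn ⟨hau, hu.2.trans ht.2⟩ htmem hu.2
      _ ≤ max 1 K * (f t * f (s - t)) := le_mul_of_one_le_left ht_nonneg (le_max_left _ _)
  · have h2a : 2 * a ∈ Icc a (s / 2) := ⟨by linarith, ht.1.trans ht.2⟩
    calc f u * f (s - u) ≤ K * (f (2 * a) * f (s - 2 * a)) := hKs u ⟨hu.1, hua⟩
      _ ≤ max 1 K * (f (2 * a) * f (s - 2 * a)) :=
          mul_le_mul_of_nonneg_right (le_max_right _ _) (hnonneg _ ⟨by linarith, h2a.2⟩)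
      _ ≤ max 1 K * (f t * f (s - t)) :=
          mul_le_mul_of_nonneg_left (hmono.monotoneOn h2a htmem ht.1)
            (zero_le_one.trans (le_max_left _ _))

theorem tendstoUniformlyOn_zero_of_le_mul {ι α : Type*} {l : Filter ι} {F : ι → α → ℝ}
    {G : ι → ℝ} {s : Set α} (K : ℝ) (hF : ∀ᶠ i in l, ∀ x ∈ s, 0 ≤ F i x ∧ F i x ≤ K * G i)
    (hG : Tendsto G l (𝓝 0)) : TendstoUniformlyOn F 0 l s := by
  have hKG : Tendsto (fun i => K * G i) l (𝓝 0) := by simpa using hG.const_mul K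
  rw [Metric.tendstoUniformlyOn_iff]
  intro ε hε
  filter_upwards [hF, hKG.eventually (gt_mem_nhds hε)] with i hi hKGi x hx
  rw [Pi.zero_apply, dist_zero_left, Real.norm_of_nonneg (hi x hx).1]
  exact (hi x hx).2.trans_lt hKGi

theorem stmt_10_general
    (f : ℝ → ℝ)
    (hpos : ∀ x, 0 ≤ x → 0 < f x)
    (hsmooth : ContDiffOn ℝ 2 f (Set.Ici (0 : ℝ)))
    (hdecr : ∃ y₀ : ℝ, AntitoneOn f (Set.Ici y₀))
    (hintpos : ∀ d > (0 : ℝ), 0 < ∫ y in (0 : ℝ)..1, f (d * y) * f (d * (1 - y)))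
    (x₀ : ℝ) (hx₀ : 0 < x₀)
    (hdec : StrictAntiOn (fun x => deriv f x / f x) (Set.Ioi x₀))
    (fZ : ℝ → ℝ → ℝ)
    (hfZ : ∀ d x, fZ d x =
      f (d * x) * f (d * (1 - x)) / ∫ y in (0 : ℝ)..1, f (d * y) * f (d * (1 - y)))
    (hto0 : ∀ x ∈ Set.Ioo (0 : ℝ) (1 / 2),
      Filter.Tendsto (fun d => fZ d x) Filter.atTop (nhds 0)) :
    ∀ c ∈ Set.Ioo (0 : ℝ) (1 / 2),
      TendstoUniformlyOn fZ 0 Filter.atTop (Set.Icc 0 c) := by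
  rintro c hc
  obtain ⟨y₀, hanti⟩ := hdecr
  have hdiff : DifferentiableOn ℝ f (Ioi x₀) := fun u hu =>
    ((hsmooth.contDiffAt (Ici_mem_nhds (hx₀.trans hu))).differentiableAt
      two_ne_zero).differentiableWithinAt
  obtain ⟨K, hK⟩ := exists_mul_comp_sub_le_mul_comp_sub hx₀.le hsmooth.continuousOn hdiff hpos
    hanti hdec
  refine tendstoUniformlyOn_zero_of_le_mul K ?_ (hto0 c hc)
  -- On `[0, c]` we have `fZ d x = g (d * x) / I d` with `g u = f u * f (d - u)`.
  filter_upwards [hK, eventually_ge_atTop (2 * x₀ / c), eventually_gt_atTop 0]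
    with d hKd hd hd0 x hx
  have hI := hintpos d hd0
  have hdc : d * c ∈ Icc (2 * x₀) (d / 2) := ⟨(div_le_iff₀ hc.1).1 hd, by nlinarith [hc.2]⟩
  have hdx : d * x ∈ Icc 0 (d * c) := ⟨by nlinarith [hx.1], by nlinarith [hx.2]⟩
  rw [hfZ, hfZ, mul_one_sub, mul_one_sub, ← mul_div_assoc]
  exact ⟨div_nonneg (mul_nonneg (hpos _ hdx.1).le (hpos _ (by linarith [hdx.2, hdc.2])).le) hI.le,
    div_le_div_of_nonneg_right (hKd _ hdc _ hdx) hI.le⟩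

/-- Under eventual decrease of `f`, eventual strict decrease of `f'/f`,
and pointwise convergence `f_{Z_d}(x) → 0` on `(0,1/2)`, the convergence `f_{Z_d} → 0`
is uniform on `[0,c]` for every `c ∈ (0,1/2)`. -/
theorem stmt_10
    (f : ℝ → ℝ)
    (hpos : ∀ x, 0 ≤ x → 0 < f x)
    (hsmooth : ContDiffOn ℝ 2 f (Set.Ici (0 : ℝ)))
    (hdens : ∫ x in Set.Ici (0 : ℝ), f x = 1)
    (hdecr : ∃ y₀ : ℝ, AntitoneOn f (Set.Ici y₀))
    (hint : ∀ d > (0 : ℝ),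
      IntervalIntegrable (fun y => f (d * y) * f (d * (1 - y))) volume 0 1)
    (hintpos : ∀ d > (0 : ℝ), 0 < ∫ y in (0 : ℝ)..1, f (d * y) * f (d * (1 - y)))
    (x₀ : ℝ) (hx₀ : 0 < x₀)
    (hdec : StrictAntiOn (fun x => deriv f x / f x) (Set.Ioi x₀))
    (fZ : ℝ → ℝ → ℝ)
    (hfZ : ∀ d x, fZ d x =
      f (d * x) * f (d * (1 - x)) / ∫ y in (0 : ℝ)..1, f (d * y) * f (d * (1 - y)))
    (hto0 : ∀ x ∈ Set.Ioo (0 : ℝ) (1 / 2),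
      Filter.Tendsto (fun d => fZ d x) Filter.atTop (nhds 0)) :
    ∀ c ∈ Set.Ioo (0 : ℝ) (1 / 2),
      TendstoUniformlyOn fZ 0 Filter.atTop (Set.Icc 0 c) :=
  stmt_10_general f hpos hsmooth hdecr hintpos x₀ hx₀ hdec fZ hfZ hto0
end

section
/- Let f : [0,∞) → (0,∞) be a twice continuously differentiable, eventually decreasing probability density function such that for every d > 0 the integral ∫₀¹ f(dy)·f(d(1−y)) dy is positive and finite. Define f_{Z_d}(x) = f(dx)·f(d(1−x)) / ∫₀¹ f(dy)·f(d(1−y)) dy for x ∈ [0,1], and let μ_d be the probability measure on [0,1] with density f_{Z_d}. Suppose there exists x₀ such that (d²/dx²) log f(x) < 0 for all x > x₀ (i.e. L = −1), and suppose f_{Z_d}(x) → 0 as d → ∞ for every x ∈ (0,1/2). Then μ_d converges in distribution, as d → ∞, to the Dirac measure δ_{1/2} concentrated at the point 1/2. -/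
/-!
Eventually `log f` is concave, say on `[c, ∞)`, so `a ↦ f a * f (S - a)` increases on `[c, S / 2]`,
while on `[0, c]` it is at most `sup f / f c` times its value at `c`. Hence for large `d` the
conditional density is bounded off `(1/2 - e, 1/2 + e)` by a constant multiple of its value at
`1/2 - e`, which tends to `0`. Thus `μ_d` puts vanishing mass outside every neighbourhood of `1/2`.
-/

open MeasureTheory Real Filter Set
open scoped ENNReal Topology

theorem ConcaveOn.add_apply_sub_le {s : Set ℝ} {ψ : ℝ → ℝ} {S a b : ℝ} (hψ : ConcaveOn ℝ s ψ)
    (ha : a ∈ s) (ha' : S - a ∈ s) (hab : a ≤ b) (hbS : 2 * b ≤ S) :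
    ψ a + ψ (S - a) ≤ ψ b + ψ (S - b) := by
  rcases (show a ≤ S - a by linarith).eq_or_lt with heq | hlt
  · obtain rfl : b = a := by linarith
    rfl
  -- `b` and `S - b` are convex combinations of `a` and `S - a` with swapped weights `t`, `1 - t`.
  set t := (S - a - b) / (S - 2 * a)
  have hpos : 0 < S - 2 * a := by linarith
  have ht0 : 0 ≤ t := div_nonneg (by linarith) hpos.le
  have ht1 : t ≤ 1 := (div_le_one hpos).2 (by linarith)
  have htS : t * (S - 2 * a) = S - a - b := div_mul_cancel₀ _ hpos.ne'
  have hb : t • a + (1 - t) • (S - a) = b := by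
    simp only [smul_eq_mul]; linear_combination -htS
  have hb' : (1 - t) • a + t • (S - a) = S - b := by
    simp only [smul_eq_mul]; linear_combination htS
  have h₁ := hψ.2 ha ha' ht0 (sub_nonneg.2 ht1) (add_sub_cancel t 1)
  have h₂ := hψ.2 ha ha' (sub_nonneg.2 ht1) ht0 (sub_add_cancel 1 t)
  rw [hb] at h₁
  rw [hb'] at h₂
  simp only [smul_eq_mul] at h₁ h₂
  linarith

theorem monotoneOn_mul_apply_sub_of_concaveOn_log {f : ℝ → ℝ} {c : ℝ}
    (hpos : ∀ t ∈ Ici c, 0 < f t) (hconc : ConcaveOn ℝ (Ici c) (fun t => log (f t))) (S : ℝ) :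
    MonotoneOn (fun a => f a * f (S - a)) (Icc c (S / 2)) := by
  intro a ha b hb hab
  have hexp : ∀ x ∈ Icc c (S / 2), f x * f (S - x) = exp (log (f x) + log (f (S - x))) := by
    intro x hx
    have hSx : S - x ∈ Ici c := by simp only [mem_Ici]; linarith [hx.1, hx.2]
    rw [exp_add, exp_log (hpos x hx.1), exp_log (hpos (S - x) hSx)]
  have hSa : S - a ∈ Ici c := by simp only [mem_Ici]; linarith [ha.1, ha.2]
  dsimp only
  rw [hexp a ha, hexp b hb, exp_le_exp]
  exact hconc.add_apply_sub_le ha.1 hSa hab (by linarith [hb.2])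

theorem concaveOn_Ici_of_deriv2_nonpos {φ : ℝ → ℝ} {a c : ℝ} (hφ : ContDiffOn ℝ 2 φ (Ioi a))
    (hac : a < c) (h : ∀ x > c, deriv (deriv φ) x ≤ 0) : ConcaveOn ℝ (Ici c) φ := by
  have hsub : Ici c ⊆ Ioi a := Ici_subset_Ioi.2 hac
  have hint : interior (Ici c) ⊆ Ioi a := interior_subset.trans hsub
  refine concaveOn_of_deriv2_nonpos (convex_Ici c) (hφ.continuousOn.mono hsub)
    ((hφ.differentiableOn two_ne_zero).mono hint)
    (((hφ.deriv_of_isOpen isOpen_Ioi (m := 1) le_rfl).differentiableOn one_ne_zero).mono hint) ?_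
  intro x hx
  rw [interior_Ici] at hx
  exact h x hx

theorem bddAbove_image_Ici_of_antitoneOn {f : ℝ → ℝ} {a y₀ : ℝ} (hf : ContinuousOn f (Ici a))
    (hanti : AntitoneOn f (Ici y₀)) : BddAbove (f '' Ici a) := by
  set b := max a y₀
  have hsplit : Ici a ⊆ Icc a b ∪ Ici b := fun x hx => by
    rcases le_total x b with h | h
    exacts [Or.inl ⟨hx, h⟩, Or.inr h]
  refine BddAbove.mono (image_mono hsplit) ?_
  rw [image_union]
  refine (isCompact_Icc.bddAbove_image (hf.mono Icc_subset_Ici_self)).union ⟨f b, ?_⟩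
  rintro _ ⟨x, hx, rfl⟩
  exact hanti (le_max_right a y₀) ((le_max_right a y₀).trans hx) hx

theorem mul_apply_sub_le_of_concaveOn_log {f : ℝ → ℝ} {c M S a b : ℝ}
    (hpos : ∀ t, 0 ≤ t → 0 < f t) (hM : ∀ t, 0 ≤ t → f t ≤ M)
    (hanti : AntitoneOn f (Ici c)) (hconc : ConcaveOn ℝ (Ici c) (fun t => log (f t)))
    (hc : 0 ≤ c) (ha : 0 ≤ a) (hab : a ≤ b) (hcb : c ≤ b) (hbS : 2 * b ≤ S) :
    f a * f (S - a) ≤ M / f c * (f b * f (S - b)) := by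
  have hmono :=
    monotoneOn_mul_apply_sub_of_concaveOn_log (fun t ht => hpos t (hc.trans ht)) hconc S
  have hb : b ∈ Icc c (S / 2) := ⟨hcb, by linarith⟩
  have hfc := hpos c hc
  have hK : 1 ≤ M / f c := (one_le_div hfc).2 (hM c hc)
  have hgb : 0 ≤ f b * f (S - b) :=
    mul_nonneg (hpos b (hc.trans hcb)).le (hpos _ (by linarith)).le
  rcases le_total c a with hca | hac
  · calc f a * f (S - a) ≤ f b * f (S - b) := hmono ⟨hca, by linarith⟩ hb hab
      _ ≤ M / f c * (f b * f (S - b)) := le_mul_of_one_le_left hgb hK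
  · -- on `[0, c]` only the bound `f ≤ M` is available, so compare with the product at `c`
    have hSc : S - c ∈ Ici c := by simp only [mem_Ici]; linarith
    have hSa : S - a ∈ Ici c := by simp only [mem_Ici]; linarith
    calc f a * f (S - a) ≤ M * f (S - c) :=
          mul_le_mul (hM a ha) (hanti hSc hSa (by linarith)) (hpos _ (by linarith)).le
            ((hpos a ha).le.trans (hM a ha))
      _ = M / f c * (f c * f (S - c)) := by field_simp
      _ ≤ M / f c * (f b * f (S - b)) :=
          mul_le_mul_of_nonneg_left (hmono ⟨le_rfl, by linarith⟩ hb hcb) (zero_le_one.trans hK)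

theorem withDensity_ofReal_apply_le {α : Type*} [MeasurableSpace α] {ν : Measure α} {φ : α → ℝ}
    {s : Set α} {B : ℝ} (hs : MeasurableSet s) (h : ∀ᵐ x ∂ν, x ∈ s → φ x ≤ B) :
    ν.withDensity (fun x => ENNReal.ofReal (φ x)) s ≤ ENNReal.ofReal B * ν s := by
  rw [withDensity_apply _ hs, ← setLIntegral_const]
  exact setLIntegral_mono_ae' hs (h.mono fun x hx hxs => ENNReal.ofReal_le_ofReal (hx hxs))

theorem one_le_liminf_of_tendsto_measure_compl {α ι : Type*} [MeasurableSpace α] {l : Filter ι}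
    [l.NeBot] {μ : ι → Measure α} {s : Set α} (hprob : ∀ᶠ i in l, IsProbabilityMeasure (μ i))
    (h : Tendsto (fun i => μ i sᶜ) l (𝓝 0)) : 1 ≤ liminf (fun i => μ i s) l := by
  have hlim : Tendsto (fun i => 1 - μ i sᶜ) l (𝓝 1) := by
    simpa using ENNReal.Tendsto.sub tendsto_const_nhds h (Or.inl ENNReal.one_ne_top)
  rw [← hlim.liminf_eq]
  refine liminf_le_liminf (hprob.mono fun i hi => ?_)
  rw [tsub_le_iff_right, ← measure_univ (μ := μ i), ← union_compl_self s]
  exact measure_union_le s sᶜ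

theorem exists_antitoneOn_concaveOn_log {f : ℝ → ℝ} {x₀ : ℝ} (hpos : ∀ x, 0 ≤ x → 0 < f x)
    (hsmooth : ContDiffOn ℝ 2 f (Ici 0)) (hdecr : ∃ y₀, AntitoneOn f (Ici y₀))
    (hlogcc : ∀ x > x₀, deriv (deriv (fun t => log (f t))) x ≤ 0) :
    ∃ c > 0, AntitoneOn f (Ici c) ∧ ConcaveOn ℝ (Ici c) (fun t => log (f t)) := by
  obtain ⟨y₀, hy₀⟩ := hdecr
  have hlog : ContDiffOn ℝ 2 (fun t => log (f t)) (Ioi 0) :=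
    (hsmooth.mono Ioi_subset_Ici_self).log fun t ht => (hpos t (le_of_lt ht)).ne'
  refine ⟨max (max x₀ y₀) 1, zero_lt_one.trans_le (le_max_right _ _),
    hy₀.mono (Ici_subset_Ici.2 ((le_max_right x₀ y₀).trans (le_max_left _ _))),
    concaveOn_Ici_of_deriv2_nonpos hlog (zero_lt_one.trans_le (le_max_right _ _)) fun x hx => ?_⟩
  exact hlogcc x (((le_max_left x₀ y₀).trans (le_max_left _ _)).trans_lt hx)

noncomputable def condDensity (f : ℝ → ℝ) (d x : ℝ) : ℝ :=
  f (d * x) * f (d * (1 - x)) / ∫ y in (0 : ℝ)..1, f (d * y) * f (d * (1 - y))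

theorem condDensity_le_of_notMem_Ioo {f : ℝ → ℝ} {c M d e x : ℝ}
    (hpos : ∀ t, 0 ≤ t → 0 < f t) (hM : ∀ t, 0 ≤ t → f t ≤ M)
    (hanti : AntitoneOn f (Ici c)) (hconc : ConcaveOn ℝ (Ici c) (fun t => log (f t)))
    (hc : 0 ≤ c) (he₀ : 0 ≤ e) (he : e ≤ 1 / 4) (hd : 4 * c ≤ d) (hx : x ∈ Icc 0 1)
    (hxe : x ∉ Ioo (1 / 2 - e) (1 / 2 + e)) :
    condDensity f d x ≤ M / f c * condDensity f d (1 / 2 - e) := by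
  have hd₀ : 0 ≤ d := by linarith
  have hleft : ∀ y, 0 ≤ y → y ≤ 1 / 2 - e → f (d * y) * f (d * (1 - y)) ≤
      M / f c * (f (d * (1 / 2 - e)) * f (d * (1 - (1 / 2 - e)))) := fun y hy₀ hy => by
    simpa only [mul_one_sub] using mul_apply_sub_le_of_concaveOn_log (S := d) hpos hM hanti hconc
      hc (mul_nonneg hd₀ hy₀) (mul_le_mul_of_nonneg_left hy hd₀)
      (by nlinarith [mul_nonneg hd₀ (sub_nonneg.2 he)]) (by nlinarith)
  have hnum : f (d * x) * f (d * (1 - x)) ≤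
      M / f c * (f (d * (1 / 2 - e)) * f (d * (1 - (1 / 2 - e)))) := by
    rcases le_or_gt x (1 / 2 - e) with h | h
    · exact hleft x hx.1 h
    · have h' : 1 / 2 + e ≤ x := not_lt.1 fun h'' => hxe ⟨h, h''⟩
      simpa only [sub_sub_cancel, mul_comm (f (d * (1 - x)))] using
        hleft (1 - x) (by linarith [hx.2]) (by linarith)
  have hint : 0 ≤ ∫ y in (0 : ℝ)..1, f (d * y) * f (d * (1 - y)) :=
    intervalIntegral.integral_nonneg zero_le_one fun y hy =>
      mul_nonneg (hpos _ (mul_nonneg hd₀ hy.1)).le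
        (hpos _ (mul_nonneg hd₀ (by linarith [hy.2]))).le
  rw [condDensity, condDensity, mul_div_assoc']
  exact div_le_div_of_nonneg_right hnum hint

theorem withDensity_condDensity_compl_Ioo_le {f : ℝ → ℝ} {c M d e : ℝ}
    (hpos : ∀ t, 0 ≤ t → 0 < f t) (hM : ∀ t, 0 ≤ t → f t ≤ M)
    (hanti : AntitoneOn f (Ici c)) (hconc : ConcaveOn ℝ (Ici c) (fun t => log (f t)))
    (hc : 0 ≤ c) (he₀ : 0 ≤ e) (he : e ≤ 1 / 4) (hd : 4 * c ≤ d) :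
    (volume.restrict (Icc (0 : ℝ) 1)).withDensity (fun x => ENNReal.ofReal (condDensity f d x))
      (Ioo (1 / 2 - e) (1 / 2 + e))ᶜ ≤ ENNReal.ofReal (M / f c * condDensity f d (1 / 2 - e)) := by
  have hbound := (ae_restrict_iff' measurableSet_Icc).2 <| ae_of_all volume fun x hx hxe =>
    condDensity_le_of_notMem_Ioo hpos hM hanti hconc hc he₀ he hd hx hxe
  refine (withDensity_ofReal_apply_le measurableSet_Ioo.compl hbound).trans ?_
  calc _ ≤ ENNReal.ofReal (M / f c * condDensity f d (1 / 2 - e)) * volume (Icc (0 : ℝ) 1) :=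
        mul_le_mul_right ((measure_mono (subset_univ _)).trans_eq (Measure.restrict_apply_univ _)) _
    _ = _ := by simp

theorem tendsto_withDensity_condDensity_compl_Ioo {f : ℝ → ℝ} {c M e : ℝ}
    (hpos : ∀ t, 0 ≤ t → 0 < f t) (hM : ∀ t, 0 ≤ t → f t ≤ M)
    (hanti : AntitoneOn f (Ici c)) (hconc : ConcaveOn ℝ (Ici c) (fun t => log (f t)))
    (hc : 0 ≤ c) (he₀ : 0 ≤ e) (he : e ≤ 1 / 4)
    (hlim : Tendsto (fun d => condDensity f d (1 / 2 - e)) atTop (𝓝 0)) :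
    Tendsto (fun d => (volume.restrict (Icc (0 : ℝ) 1)).withDensity
        (fun x => ENNReal.ofReal (condDensity f d x)) (Ioo (1 / 2 - e) (1 / 2 + e))ᶜ)
      atTop (𝓝 0) := by
  have hB : Tendsto (fun d => ENNReal.ofReal (M / f c * condDensity f d (1 / 2 - e))) atTop
      (𝓝 0) := by
    simpa using ENNReal.tendsto_ofReal (hlim.const_mul (M / f c))
  refine tendsto_of_tendsto_of_tendsto_of_le_of_le' tendsto_const_nhds hB
    (Eventually.of_forall fun _ => zero_le) ?_
  filter_upwards [eventually_ge_atTop (4 * c)] with d hd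
  exact withDensity_condDensity_compl_Ioo_le hpos hM hanti hconc hc he₀ he hd

theorem stmt_11_general
    (f : ℝ → ℝ)
    (hpos : ∀ x, 0 ≤ x → 0 < f x)
    (hsmooth : ContDiffOn ℝ 2 f (Set.Ici (0 : ℝ)))
    (hdecr : ∃ y₀ : ℝ, AntitoneOn f (Set.Ici y₀))
    (x₀ : ℝ)
    (hlogcc : ∀ x > x₀, deriv (deriv (fun t => Real.log (f t))) x < 0)
    (fZ : ℝ → ℝ → ℝ)
    (hfZ : ∀ d x, fZ d x =
      f (d * x) * f (d * (1 - x)) / ∫ y in (0 : ℝ)..1, f (d * y) * f (d * (1 - y)))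
    (hto0 : ∀ x ∈ Set.Ioo (0 : ℝ) (1 / 2),
      Filter.Tendsto (fun d => fZ d x) Filter.atTop (nhds 0))
    (μ : ℝ → Measure ℝ)
    (hμ : ∀ d, μ d = (volume.restrict (Set.Icc (0 : ℝ) 1)).withDensity
      (fun x => ENNReal.ofReal (fZ d x)))
    (hprob : ∀ d > (0 : ℝ), IsProbabilityMeasure (μ d)) :
    ∀ A : Set ℝ, IsOpen A →
      Measure.dirac (1 / 2 : ℝ) A ≤ Filter.liminf (fun d => μ d A) Filter.atTop := by
  obtain rfl : fZ = condDensity f := funext₂ hfZ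
  obtain ⟨c, hc, hanti, hconc⟩ :=
    exists_antitoneOn_concaveOn_log hpos hsmooth hdecr fun x hx => (hlogcc x hx).le
  obtain ⟨M, hM⟩ := bddAbove_image_Ici_of_antitoneOn hsmooth.continuousOn hanti
  intro A hA
  by_cases hmem : (1 / 2 : ℝ) ∈ A
  swap
  · rw [Measure.dirac_apply, indicator_of_notMem hmem]
    exact zero_le
  obtain ⟨ε, hε, hball⟩ := Metric.isOpen_iff.1 hA _ hmem
  set e := min ε (1 / 4)
  have he₀ : 0 < e := lt_min hε (by norm_num)
  have he : e ≤ 1 / 4 := min_le_right _ _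
  have hIA : Ioo (1 / 2 - e) (1 / 2 + e) ⊆ A := by
    rw [← Real.ball_eq_Ioo]
    exact (Metric.ball_subset_ball (min_le_left _ _)).trans hball
  have hcompl : Tendsto (fun d => μ d (Ioo (1 / 2 - e) (1 / 2 + e))ᶜ) atTop (𝓝 0) := by
    simp only [hμ]
    exact tendsto_withDensity_condDensity_compl_Ioo hpos (fun t ht => hM (mem_image_of_mem f ht))
      hanti hconc hc.le he₀.le he (hto0 _ ⟨by linarith, by linarith⟩)
  rw [Measure.dirac_apply_of_mem hmem]
  calc 1 ≤ liminf (fun d => μ d (Ioo (1 / 2 - e) (1 / 2 + e))) atTop :=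
        one_le_liminf_of_tendsto_measure_compl ((eventually_gt_atTop 0).mono hprob) hcompl
    _ ≤ liminf (fun d => μ d A) atTop :=
        liminf_le_liminf (Eventually.of_forall fun d => measure_mono hIA)

/-- If `(log f)'' < 0` eventually (`L = −1`) and `f_{Z_d}(x) → 0` for all
`x ∈ (0,1/2)`, then the laws `μ_d` of `Z_d` converge in distribution to `δ_{1/2}`:
`liminf_{d→∞} μ_d(A) ≥ δ_{1/2}(A)` for every open set `A`. -/
theorem stmt_11
    (f : ℝ → ℝ)
    (hpos : ∀ x, 0 ≤ x → 0 < f x)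
    (hsmooth : ContDiffOn ℝ 2 f (Set.Ici (0 : ℝ)))
    (hdens : ∫ x in Set.Ici (0 : ℝ), f x = 1)
    (hdecr : ∃ y₀ : ℝ, AntitoneOn f (Set.Ici y₀))
    (hint : ∀ d > (0 : ℝ),
      IntervalIntegrable (fun y => f (d * y) * f (d * (1 - y))) volume 0 1)
    (hintpos : ∀ d > (0 : ℝ), 0 < ∫ y in (0 : ℝ)..1, f (d * y) * f (d * (1 - y)))
    (x₀ : ℝ)
    (hlogcc : ∀ x > x₀, deriv (deriv (fun t => Real.log (f t))) x < 0)
    (fZ : ℝ → ℝ → ℝ)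
    (hfZ : ∀ d x, fZ d x =
      f (d * x) * f (d * (1 - x)) / ∫ y in (0 : ℝ)..1, f (d * y) * f (d * (1 - y)))
    (hto0 : ∀ x ∈ Set.Ioo (0 : ℝ) (1 / 2),
      Filter.Tendsto (fun d => fZ d x) Filter.atTop (nhds 0))
    (μ : ℝ → Measure ℝ)
    (hμ : ∀ d, μ d = (volume.restrict (Set.Icc (0 : ℝ) 1)).withDensity
      (fun x => ENNReal.ofReal (fZ d x)))
    (hprob : ∀ d > (0 : ℝ), IsProbabilityMeasure (μ d)) :
    ∀ A : Set ℝ, IsOpen A →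
      Measure.dirac (1 / 2 : ℝ) A ≤ Filter.liminf (fun d => μ d A) Filter.atTop :=
  stmt_11_general f hpos hsmooth hdecr x₀ hlogcc fZ hfZ hto0 μ hμ hprob
end

section
/- Let −∞ < a < b < ∞ and let (g_d)_{d>0} be a family of functions on [a,b] such that each g_d is continuously differentiable on [a,b] and is either monotone increasing or monotone decreasing, and suppose there exists M > 0 with 0 < |g_d(x)| < M for every d > 0 and every x ∈ [a,b]. If lim_{d→∞} |g_d'(x)/g_d(x)| = ∞ for every x ∈ (a,b), then g_d(x) → 0 as d → ∞ for every x ∈ (a,b). -/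
/-!
Suppose `g_d(x₀) ↛ 0`, so `|g_d(x₀)| ≥ ε` for arbitrarily large `d`. By monotonicity `|g_d| ≥ ε`
on `[a, x₀]` or on `[x₀, b]`, and one of the two sides is chosen for arbitrarily large `d`.
On that side `|g_d'| ≥ ε |g_d'/g_d| → ∞` pointwise, whereas for a monotone function the integral
of `|g_d'|` over an interval is at most the increment of `g_d` there (Lebesgue), hence at most `2M`.
Fatou's lemma makes these incompatible.
-/

open Filter Set MeasureTheory
open scoped ENNReal Topology

theorem MonotoneOn.lintegral_enorm_deriv_le {f : ℝ → ℝ} {a b : ℝ} (hab : a ≤ b)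
    (hf : MonotoneOn f (Icc a b)) :
    ∫⁻ x in Icc a b, ‖deriv f x‖ₑ ≤ ENNReal.ofReal (f b - f a) := by
  obtain ⟨G, hGf, hG, hG'⟩ := hf.exists_tendsto_deriv_liminf_lintegral_enorm_le hab
  exact (lintegral_enorm_le_liminf_of_tendsto hGf fun n => (hG n).aemeasurable.enorm).trans hG'

theorem AntitoneOn.lintegral_enorm_deriv_le {f : ℝ → ℝ} {a b : ℝ} (hab : a ≤ b)
    (hf : AntitoneOn f (Icc a b)) :
    ∫⁻ x in Icc a b, ‖deriv f x‖ₑ ≤ ENNReal.ofReal (f a - f b) := by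
  simpa [← Pi.neg_def, deriv.neg', sub_eq_add_neg, add_comm] using
    hf.neg.lintegral_enorm_deriv_le hab

theorem lintegral_enorm_deriv_le_two_mul_of_abs_le {f : ℝ → ℝ} {a b M : ℝ} (hab : a ≤ b)
    (hf : MonotoneOn f (Icc a b) ∨ AntitoneOn f (Icc a b))
    (hM : ∀ x ∈ Icc a b, |f x| ≤ M) :
    ∫⁻ x in Icc a b, ‖deriv f x‖ₑ ≤ ENNReal.ofReal (2 * M) := by
  have ha := abs_le.1 (hM a ⟨le_rfl, hab⟩)
  have hb := abs_le.1 (hM b ⟨hab, le_rfl⟩)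
  rcases hf with hf | hf
  · exact (hf.lintegral_enorm_deriv_le hab).trans (ENNReal.ofReal_le_ofReal (by linarith))
  · exact (hf.lintegral_enorm_deriv_le hab).trans (ENNReal.ofReal_le_ofReal (by linarith))

theorem MonotoneOn.le_abs_on_left_or_right {f : ℝ → ℝ} {a b x₀ ε : ℝ}
    (hf : MonotoneOn f (Icc a b)) (hx₀ : x₀ ∈ Icc a b) (hε : ε ≤ |f x₀|) :
    (∀ y ∈ Icc a x₀, ε ≤ |f y|) ∨ (∀ y ∈ Icc x₀ b, ε ≤ |f y|) := by
  rcases le_total 0 (f x₀) with hpos | hneg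
  · refine Or.inr fun y hy => ?_
    calc ε ≤ |f x₀| := hε
      _ = f x₀ := abs_of_nonneg hpos
      _ ≤ f y := hf hx₀ ⟨hx₀.1.trans hy.1, hy.2⟩ hy.1
      _ ≤ |f y| := le_abs_self _
  · refine Or.inl fun y hy => ?_
    calc ε ≤ |f x₀| := hε
      _ = -f x₀ := abs_of_nonpos hneg
      _ ≤ -f y := neg_le_neg (hf ⟨hy.1, hy.2.trans hx₀.2⟩ hx₀ hy.2)
      _ ≤ |f y| := neg_le_abs _

theorem AntitoneOn.le_abs_on_left_or_right {f : ℝ → ℝ} {a b x₀ ε : ℝ}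
    (hf : AntitoneOn f (Icc a b)) (hx₀ : x₀ ∈ Icc a b) (hε : ε ≤ |f x₀|) :
    (∀ y ∈ Icc a x₀, ε ≤ |f y|) ∨ (∀ y ∈ Icc x₀ b, ε ≤ |f y|) := by
  simpa only [abs_neg] using hf.neg.le_abs_on_left_or_right hx₀ (by rwa [abs_neg])

theorem measure_eq_zero_of_lintegral_le_of_tendsto_top {α ι : Type*} [MeasurableSpace α]
    {μ : Measure α} {l : Filter ι} [l.NeBot] [l.IsCountablyGenerated] {F : ι → α → ℝ≥0∞}
    {C : ℝ≥0∞} (hF : ∀ i, AEMeasurable (F i) μ) (hC : C ≠ ∞)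
    (hbound : ∀ᶠ i in l, ∫⁻ x, F i x ∂μ ≤ C) (htop : ∀ᵐ x ∂μ, Tendsto (F · x) l (𝓝 ∞)) :
    μ = 0 := by
  have hliminf : ∫⁻ x, liminf (F · x) l ∂μ = ∞ * μ univ := by
    rw [lintegral_congr_ae (htop.mono fun x hx => hx.liminf_eq), lintegral_const]
  have hle : ∞ * μ univ ≤ C :=
    hliminf ▸ (lintegral_liminf_le' hF).trans (liminf_le_of_frequently_le' hbound.frequently)
  by_contra hμ
  rw [ENNReal.top_mul (Measure.measure_univ_ne_zero.2 hμ)] at hle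
  exact hC (top_le_iff.1 hle)

theorem not_forall_tendsto_abs_deriv_div_atTop {ι : Type*} {l : Filter ι} [l.NeBot]
    [l.IsCountablyGenerated] {f : ι → ℝ → ℝ} {a b ε M : ℝ} (hab : a < b) (hε : 0 < ε)
    (hmono : ∀ᶠ i in l, MonotoneOn (f i) (Icc a b) ∨ AntitoneOn (f i) (Icc a b))
    (hM : ∀ᶠ i in l, ∀ x ∈ Icc a b, |f i x| ≤ M)
    (hlow : ∀ᶠ i in l, ∀ x ∈ Icc a b, ε ≤ |f i x|) :
    ¬ ∀ x ∈ Ioo a b, Tendsto (fun i => |deriv (f i) x / f i x|) l atTop := by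
  intro hlim
  have hderiv : ∀ x ∈ Ioo a b, Tendsto (fun i => ‖deriv (f i) x‖ₑ) l (𝓝 ∞) := by
    intro x hx
    have hlarge : ∀ᶠ i in l, ε * |deriv (f i) x / f i x| ≤ |deriv (f i) x| := by
      filter_upwards [hlow] with i hi
      have hfx : ε ≤ |f i x| := hi x (Ioo_subset_Icc_self hx)
      rw [abs_div]
      calc ε * (|deriv (f i) x| / |f i x|) ≤ |f i x| * (|deriv (f i) x| / |f i x|) := by
            gcongr
        _ = |deriv (f i) x| := mul_div_cancel₀ _ (hε.trans_le hfx).ne'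
    simpa only [Real.enorm_eq_ofReal_abs, Function.comp_def] using ENNReal.tendsto_ofReal_atTop.comp
      (tendsto_atTop_mono' l hlarge ((hlim x hx).const_mul_atTop hε))
  have hbound : ∀ᶠ i in l, ∫⁻ x in Icc a b, ‖deriv (f i) x‖ₑ ≤ ENNReal.ofReal (2 * M) := by
    filter_upwards [hmono, hM] with i hi hMi
    exact lintegral_enorm_deriv_le_two_mul_of_abs_le hab.le hi hMi
  have hderiv_ae :
      ∀ᵐ x ∂volume.restrict (Icc a b), Tendsto (fun i => ‖deriv (f i) x‖ₑ) l (𝓝 ∞) := by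
    rw [← restrict_Ioo_eq_restrict_Icc]
    exact (ae_restrict_iff' measurableSet_Ioo).2 (.of_forall hderiv)
  have hzero := measure_eq_zero_of_lintegral_le_of_tendsto_top
    (fun i => (measurable_deriv (f i)).enorm.aemeasurable) ENNReal.ofReal_ne_top hbound
    hderiv_ae
  rw [Measure.restrict_eq_zero, Real.volume_Icc, ENNReal.ofReal_eq_zero] at hzero
  linarith

theorem stmt_13_general
    (a b : ℝ)
    (g : ℝ → ℝ → ℝ) (M : ℝ)
    (hmono : ∀ d > (0 : ℝ),
      MonotoneOn (g d) (Set.Icc a b) ∨ AntitoneOn (g d) (Set.Icc a b))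
    (hbdd : ∀ d > (0 : ℝ), ∀ x ∈ Set.Icc a b, 0 < |g d x| ∧ |g d x| < M)
    (hlim : ∀ x ∈ Set.Ioo a b,
      Filter.Tendsto (fun d => |deriv (g d) x / g d x|) Filter.atTop Filter.atTop) :
    ∀ x ∈ Set.Ioo a b, Filter.Tendsto (fun d => g d x) Filter.atTop (nhds 0) := by
  intro x₀ hx₀
  refine Metric.tendsto_nhds.2 fun ε hε => ?_
  simp only [Real.dist_0_eq_abs]
  by_contra hfar
  have hside : ∃ᶠ d in atTop, (0 < d ∧ ∀ y ∈ Icc a x₀, ε ≤ |g d y|) ∨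
      (0 < d ∧ ∀ y ∈ Icc x₀ b, ε ≤ |g d y|) := by
    refine ((not_eventually.1 hfar).and_eventually (eventually_gt_atTop 0)).mono ?_
    rintro d ⟨hfar_d, hd⟩
    have hx₀' : x₀ ∈ Icc a b := Ioo_subset_Icc_self hx₀
    have hsides := (hmono d hd).elim (·.le_abs_on_left_or_right hx₀' (not_lt.1 hfar_d))
      (·.le_abs_on_left_or_right hx₀' (not_lt.1 hfar_d))
    exact hsides.imp (⟨hd, ·⟩) (⟨hd, ·⟩)
  obtain ⟨c₁, c₂, hac₁, hc, hc₂b, hfreq⟩ : ∃ c₁ c₂, a ≤ c₁ ∧ c₁ < c₂ ∧ c₂ ≤ b ∧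
      ∃ᶠ d in atTop, 0 < d ∧ ∀ y ∈ Icc c₁ c₂, ε ≤ |g d y| := by
    rcases frequently_or_distrib.1 hside with h | h
    exacts [⟨a, x₀, le_rfl, hx₀.1, hx₀.2.le, h⟩, ⟨x₀, b, hx₀.1.le, hx₀.2, le_rfl, h⟩]
  have := frequently_iff_neBot.1 hfreq
  have hS : ∀ᶠ d in atTop ⊓ 𝓟 {d | 0 < d ∧ ∀ y ∈ Icc c₁ c₂, ε ≤ |g d y|},
      0 < d ∧ ∀ y ∈ Icc c₁ c₂, ε ≤ |g d y| := mem_inf_of_right (mem_principal_self _)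
  have hsub : Icc c₁ c₂ ⊆ Icc a b := Icc_subset_Icc hac₁ hc₂b
  exact not_forall_tendsto_abs_deriv_div_atTop hc hε
    (hS.mono fun d hd => (hmono d hd.1).imp (·.mono hsub) (·.mono hsub))
    (hS.mono fun d hd x hx => (hbdd d hd.1 x (hsub hx)).2.le) (hS.mono fun _ hd => hd.2)
    fun x hx => (hlim x (Ioo_subset_Ioo hac₁ hc₂b hx)).mono_left inf_le_left

/-- An analytic lemma: a family `(g_d)_{d>0}` of monotone, continuously
differentiable, uniformly bounded, nonvanishing functions on `[a,b]` with
`|g_d'(x)/g_d(x)| → ∞` on `(a,b)` must satisfy `g_d(x) → 0` on `(a,b)`. -/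
theorem stmt_13
    (a b : ℝ) (hab : a < b)
    (g : ℝ → ℝ → ℝ) (M : ℝ)
    (hmono : ∀ d > (0 : ℝ),
      MonotoneOn (g d) (Set.Icc a b) ∨ AntitoneOn (g d) (Set.Icc a b))
    (hsmooth : ∀ d > (0 : ℝ), ContDiffOn ℝ 1 (g d) (Set.Icc a b))
    (hbdd : ∀ d > (0 : ℝ), ∀ x ∈ Set.Icc a b, 0 < |g d x| ∧ |g d x| < M)
    (hlim : ∀ x ∈ Set.Ioo a b,
      Filter.Tendsto (fun d => |deriv (g d) x / g d x|) Filter.atTop Filter.atTop) :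
    ∀ x ∈ Set.Ioo a b, Filter.Tendsto (fun d => g d x) Filter.atTop (nhds 0) :=
  stmt_13_general a b g M hmono hbdd hlim
end

section
/- Let f : [0,∞) → (0,∞) be a twice continuously differentiable probability density function such that for every d > 0 the integral ∫₀¹ f(dy)·f(d(1−y)) dy is positive and finite. Suppose f is eventually strictly log-convex or eventually strictly log-concave (i.e. there exists x₀ such that (d²/dx²) log f(x) > 0 for all x > x₀, or (d²/dx²) log f(x) < 0 for all x > x₀), and suppose that for every x ∈ (0,1/2) one has lim_{d→∞} d·| f'(dx)/f(dx) − f'(d(1−x))/f(d(1−x)) | = ∞. Define f_{Z_d}(x) = f(dx)·f(d(1−x)) / ∫₀¹ f(dy)·f(d(1−y)) dy. Then f_{Z_d}(x) → 0 as d → ∞ for every x ∈ (0,1/2). -/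
/-!
Let `g_d(y) = log f(dy) + log f(d(1-y))`, so that `f_{Z_d} ∝ exp g_d` on `[0,1]`. The function
`g_d` is symmetric about `1/2`, and for fixed `s > 0` it is convex (resp. concave) on `[s, 1 - s]`
as soon as `d s` exceeds the point beyond which `log f` is convex (resp. concave). Its slope at `z`
has absolute value `d |f'/f(dz) - f'/f(d(1-z))|`, which tends to infinity.

* Convex case: by symmetry `g_d'(x) ≤ 0`, and the tangent line at `x` shows that `g_d` exceeds
  `g_d(x)` by at least `|g_d'(x)| x / 4` on `[x/2, 3x/4]`.
* Concave case: for `x < x' < 1/2` symmetry gives `g_d'(x') ≥ 0`, the tangent line at `x'` puts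
  `g_d(x)` below `g_d(x')` by `|g_d'(x')| (x' - x)`, and `g_d ≥ g_d(x')` on `[x', 1 - x']`.

Either way the normalising integral is at least `f(dx) f(d(1-x))` times a factor tending to
infinity, so `f_{Z_d}(x) → 0`.
-/

open MeasureTheory Real Filter Set Topology

lemma ConvexOn.add_abs_mul_le_of_hasDerivAt {g : ℝ → ℝ} {S : Set ℝ} {g' x y z : ℝ}
    (hg : ConvexOn ℝ S g) (hy : y ∈ S) (hx : x ∈ S) (hz : z ∈ S) (hyx : y < x) (hxz : x < z)
    (hgz : g z ≤ g x) (hg' : HasDerivAt g g' x) :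
    g x + |g'| * (x - y) ≤ g y := by
  have hg'_nonpos : g' ≤ 0 := by
    have := hg.le_slope_of_hasDerivAt hx hz hxz hg'
    rw [slope_def_field] at this
    exact this.trans (div_nonpos_of_nonpos_of_nonneg (by linarith) (by linarith))
  have hslope := hg.slope_le_of_hasDerivAt hy hx hyx hg'
  rw [slope_def_field, div_le_iff₀ (by linarith)] at hslope
  rw [abs_of_nonpos hg'_nonpos]
  linarith

lemma ConcaveOn.add_abs_mul_le_of_hasDerivAt {g : ℝ → ℝ} {S : Set ℝ} {g' x y z : ℝ}
    (hg : ConcaveOn ℝ S g) (hx : x ∈ S) (hy : y ∈ S) (hz : z ∈ S) (hxy : x < y) (hyz : y < z)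
    (hgz : g y ≤ g z) (hg' : HasDerivAt g g' y) :
    g x + |g'| * (y - x) ≤ g y := by
  have hg'_nonneg : 0 ≤ g' := by
    have := hg.slope_le_of_hasDerivAt hy hz hyz hg'
    rw [slope_def_field] at this
    exact (div_nonneg (by linarith) (by linarith)).trans this
  have hslope := hg.le_slope_of_hasDerivAt hx hy hxy hg'
  rw [slope_def_field, le_div_iff₀ (by linarith)] at hslope
  rw [abs_of_nonneg hg'_nonneg]
  linarith

lemma div_intervalIntegral_le_exp_neg {h : ℝ → ℝ} {α β a b x L : ℝ} (hαa : α ≤ a) (hab : a < b)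
    (hbβ : b ≤ β) (hnn : ∀ y ∈ Icc α β, 0 ≤ h y) (hint : IntervalIntegrable h volume α β)
    (hx : 0 < h x) (hgap : ∀ y ∈ Icc a b, h x * exp L ≤ h y) :
    h x / ∫ y in α..β, h y ≤ exp (-L) / (b - a) := by
  have hlower : (b - a) * (h x * exp L) ≤ ∫ y in α..β, h y := calc
    (b - a) * (h x * exp L) ≤ ∫ y in a..b, h y := by
      have hint' : IntervalIntegrable h volume a b := hint.mono_set (by
        rw [uIcc_of_le hab.le, uIcc_of_le (hαa.trans (hab.le.trans hbβ))]
        exact Icc_subset_Icc hαa hbβ)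
      simpa [mul_left_comm] using
        intervalIntegral.integral_mono_on hab.le intervalIntegrable_const hint' hgap
    _ ≤ ∫ y in α..β, h y := by
      refine intervalIntegral.integral_mono_interval hαa hab.le hbβ ?_ hint
      filter_upwards [ae_restrict_mem measurableSet_Ioc] with y hy
      exact hnn y ⟨hy.1.le, hy.2⟩
  have hba : 0 < b - a := sub_pos.2 hab
  rw [div_le_div_iff₀ (lt_of_lt_of_le (by positivity) hlower) hba, exp_neg]
  calc h x * (b - a) = (exp L)⁻¹ * ((b - a) * (h x * exp L)) := by
        field_simp
    _ ≤ (exp L)⁻¹ * ∫ y in α..β, h y := by gcongr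

noncomputable def logJointDensity (f : ℝ → ℝ) (d y : ℝ) : ℝ :=
  log (f (d * y)) + log (f (d * (1 - y)))

lemma logJointDensity_one_sub (f : ℝ → ℝ) (d y : ℝ) :
    logJointDensity f d (1 - y) = logJointDensity f d y := by
  simp only [logJointDensity, sub_sub_cancel, add_comm]

lemma exp_logJointDensity {f : ℝ → ℝ} (hpos : ∀ x, 0 ≤ x → 0 < f x) {d y : ℝ} (hd : 0 ≤ d)
    (hy : y ∈ Icc (0 : ℝ) 1) :
    exp (logJointDensity f d y) = f (d * y) * f (d * (1 - y)) := by
  have h₀ : 0 ≤ d * y := mul_nonneg hd hy.1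
  have h₁ : 0 ≤ d * (1 - y) := mul_nonneg hd (sub_nonneg.2 hy.2)
  rw [logJointDensity, exp_add, exp_log (hpos _ h₀), exp_log (hpos _ h₁)]

lemma hasDerivAt_logJointDensity {f : ℝ → ℝ} (hpos : ∀ x, 0 ≤ x → 0 < f x)
    (hf : DifferentiableOn ℝ f (Ioi 0)) {d y : ℝ} (h₀ : 0 < d * y) (h₁ : 0 < d * (1 - y)) :
    HasDerivAt (logJointDensity f d)
      (d * (deriv f (d * y) / f (d * y) - deriv f (d * (1 - y)) / f (d * (1 - y)))) y := by
  have hlog : ∀ t, 0 < t → HasDerivAt (fun u => log (f u)) (deriv f t / f t) t := fun t ht =>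
    ((hf.differentiableAt (Ioi_mem_nhds ht)).hasDerivAt).log (hpos t ht.le).ne'
  have hl := (hlog _ h₀).comp y ((hasDerivAt_id y).const_mul d)
  have hr := (hlog _ h₁).comp y (((hasDerivAt_id y).const_sub 1).const_mul d)
  exact (hl.add hr).congr_deriv (by ring)

lemma convexOn_logJointDensity {f : ℝ → ℝ} {c d s : ℝ}
    (hconv : ConvexOn ℝ (Ioi c) (fun t => log (f t))) (hd : 0 < d) (hs : c < d * s) :
    ConvexOn ℝ (Icc s (1 - s)) (logJointDensity f d) := by
  have hl : ConvexOn ℝ (Icc s (1 - s)) ((fun t => log (f t)) ∘ AffineMap.lineMap 0 d) :=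
    (hconv.comp_affineMap _).subset (fun y hy => by
      simp only [mem_preimage, AffineMap.lineMap_apply_ring', mem_Ioi]; nlinarith [hy.1])
      (convex_Icc _ _)
  have hr : ConvexOn ℝ (Icc s (1 - s)) ((fun t => log (f t)) ∘ AffineMap.lineMap d 0) :=
    (hconv.comp_affineMap _).subset (fun y hy => by
      simp only [mem_preimage, AffineMap.lineMap_apply_ring', mem_Ioi]; nlinarith [hy.2])
      (convex_Icc _ _)
  refine (hl.add hr).congr fun y _ => ?_
  simp only [logJointDensity, Pi.add_apply, Function.comp_apply, AffineMap.lineMap_apply_ring']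
  ring_nf

lemma concaveOn_logJointDensity {f : ℝ → ℝ} {c d s : ℝ}
    (hconc : ConcaveOn ℝ (Ioi c) (fun t => log (f t))) (hd : 0 < d) (hs : c < d * s) :
    ConcaveOn ℝ (Icc s (1 - s)) (logJointDensity f d) := by
  have hl : ConcaveOn ℝ (Icc s (1 - s)) ((fun t => log (f t)) ∘ AffineMap.lineMap 0 d) :=
    (hconc.comp_affineMap _).subset (fun y hy => by
      simp only [mem_preimage, AffineMap.lineMap_apply_ring', mem_Ioi]; nlinarith [hy.1])
      (convex_Icc _ _)
  have hr : ConcaveOn ℝ (Icc s (1 - s)) ((fun t => log (f t)) ∘ AffineMap.lineMap d 0) :=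
    (hconc.comp_affineMap _).subset (fun y hy => by
      simp only [mem_preimage, AffineMap.lineMap_apply_ring', mem_Ioi]; nlinarith [hy.2])
      (convex_Icc _ _)
  refine (hl.add hr).congr fun y _ => ?_
  simp only [logJointDensity, Pi.add_apply, Function.comp_apply, AffineMap.lineMap_apply_ring']
  ring_nf

lemma exists_convexOn_or_concaveOn_log {f : ℝ → ℝ} (hpos : ∀ x, 0 ≤ x → 0 < f x)
    (hsmooth : ContDiffOn ℝ 2 f (Ici 0))
    (hlog : (∃ x₀ : ℝ, ∀ x > x₀, 0 < deriv (deriv (fun t => log (f t))) x) ∨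
      (∃ x₀ : ℝ, ∀ x > x₀, deriv (deriv (fun t => log (f t))) x < 0)) :
    ∃ c, ConvexOn ℝ (Ioi c) (fun t => log (f t)) ∨ ConcaveOn ℝ (Ioi c) (fun t => log (f t)) := by
  have hC2 : ContDiffOn ℝ 2 (fun t => log (f t)) (Ioi 0) :=
    (hsmooth.mono Ioi_subset_Ici_self).log fun t ht => (hpos t (le_of_lt ht)).ne'
  have hdiff : ∀ c, 0 ≤ c → DifferentiableOn ℝ (fun t => log (f t)) (Ioi c) ∧
      DifferentiableOn ℝ (deriv fun t => log (f t)) (Ioi c) := fun c hc =>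
    ⟨(hC2.differentiableOn (by norm_num)).mono (Ioi_subset_Ioi hc),
      ((hC2.deriv_of_isOpen isOpen_Ioi (m := 1) (by norm_num)).differentiableOn one_ne_zero).mono
        (Ioi_subset_Ioi hc)⟩
  rcases hlog with ⟨x₀, hx₀⟩ | ⟨x₀, hx₀⟩
  · obtain ⟨h₁, h₂⟩ := hdiff (max x₀ 0) (le_max_right _ _)
    exact ⟨max x₀ 0, .inl <| convexOn_of_deriv2_nonneg' (convex_Ioi _) h₁ h₂ fun t ht =>
      (hx₀ t (lt_of_le_of_lt (le_max_left _ _) ht)).le⟩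
  · obtain ⟨h₁, h₂⟩ := hdiff (max x₀ 0) (le_max_right _ _)
    exact ⟨max x₀ 0, .inr <| concaveOn_of_deriv2_nonpos' (convex_Ioi _) h₁ h₂ fun t ht =>
      (hx₀ t (lt_of_le_of_lt (le_max_left _ _) ht)).le⟩

lemma tendsto_div_intervalIntegral_zero_of_gap {f : ℝ → ℝ} (hpos : ∀ x, 0 ≤ x → 0 < f x)
    (hint : ∀ d > (0 : ℝ), IntervalIntegrable (fun y => f (d * y) * f (d * (1 - y))) volume 0 1)
    {x a b : ℝ} (hx : x ∈ Icc (0 : ℝ) 1) (ha : 0 ≤ a) (hab : a < b) (hb : b ≤ 1)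
    {L : ℝ → ℝ} (hL : Tendsto L atTop atTop)
    (hgap : ∀ᶠ d in atTop, ∀ y ∈ Icc a b, logJointDensity f d x + L d ≤ logJointDensity f d y) :
    Tendsto (fun d => f (d * x) * f (d * (1 - x)) / ∫ y in (0 : ℝ)..1, f (d * y) * f (d * (1 - y)))
      atTop (𝓝 0) := by
  have hprod : ∀ d, 0 ≤ d → ∀ y ∈ Icc (0 : ℝ) 1, 0 < f (d * y) * f (d * (1 - y)) :=
    fun d hd y hy => by rw [← exp_logJointDensity hpos hd hy]; exact exp_pos _
  have hbound : Tendsto (fun d => exp (-L d) / (b - a)) atTop (𝓝 0) := by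
    simpa using (tendsto_exp_neg_atTop_nhds_zero.comp hL).div_const (b - a)
  refine tendsto_of_tendsto_of_tendsto_of_le_of_le' tendsto_const_nhds hbound ?_ ?_
  · filter_upwards [eventually_ge_atTop 0] with d hd
    exact div_nonneg (hprod d hd x hx).le
      (intervalIntegral.integral_nonneg zero_le_one fun y hy => (hprod d hd y hy).le)
  · filter_upwards [eventually_gt_atTop 0, hgap] with d hd hgap
    refine div_intervalIntegral_le_exp_neg ha hab hb (fun y hy => (hprod d hd.le y hy).le)
      (hint d hd) (hprod d hd.le x hx) fun y hy => ?_
    have hy' : y ∈ Icc (0 : ℝ) 1 := ⟨ha.trans hy.1, hy.2.trans hb⟩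
    rw [← exp_logJointDensity hpos hd.le hx, ← exp_logJointDensity hpos hd.le hy', ← exp_add]
    exact exp_le_exp.2 (hgap y hy)

lemma logJointDensity_add_le_of_convexOn {f : ℝ → ℝ} (hpos : ∀ x, 0 ≤ x → 0 < f x)
    (hf : DifferentiableOn ℝ f (Ioi 0)) {c d s w x y : ℝ}
    (hconv : ConvexOn ℝ (Ioi c) (fun t => log (f t))) (hd : 0 < d) (hc : c < d * s) (hs : 0 < s)
    (hwx : w < x) (hx : x < 1 / 2) (hy : y ∈ Icc s w) :
    logJointDensity f d x +
        (x - w) * (d * |deriv f (d * x) / f (d * x) - deriv f (d * (1 - x)) / f (d * (1 - x))|) ≤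
      logJointDensity f d y := by
  set r := deriv f (d * x) / f (d * x) - deriv f (d * (1 - x)) / f (d * (1 - x))
  have hsx : s < x := hy.1.trans_lt (hy.2.trans_lt hwx)
  have hg' := hasDerivAt_logJointDensity hpos hf (d := d) (y := x) (by nlinarith) (by nlinarith)
  have key := (convexOn_logJointDensity hconv hd hc).add_abs_mul_le_of_hasDerivAt
    (z := 1 - x) ⟨hy.1, by linarith [hy.2]⟩ ⟨hsx.le, by linarith⟩ ⟨by linarith, by linarith⟩
    (by linarith [hy.2]) (by linarith) (logJointDensity_one_sub f d x).le hg'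
  rw [abs_mul, abs_of_pos hd] at key
  nlinarith [mul_nonneg (mul_nonneg hd.le (abs_nonneg r)) (sub_nonneg.2 hy.2)]

lemma logJointDensity_add_le_of_concaveOn {f : ℝ → ℝ} (hpos : ∀ x, 0 ≤ x → 0 < f x)
    (hf : DifferentiableOn ℝ f (Ioi 0)) {c d x x' y : ℝ}
    (hconc : ConcaveOn ℝ (Ioi c) (fun t => log (f t))) (hd : 0 < d) (hc : c < d * x) (hx : 0 < x)
    (hxx' : x < x') (hx' : x' < 1 / 2) (hy : y ∈ Icc x' (1 - x')) :
    logJointDensity f d x +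
        (x' - x) * (d * |deriv f (d * x') / f (d * x') - deriv f (d * (1 - x')) / f (d * (1 - x'))|) ≤
      logJointDensity f d y := by
  have hg := concaveOn_logJointDensity hconc hd hc
  have hx'S : x' ∈ Icc x (1 - x) := ⟨hxx'.le, by linarith⟩
  have hzS : 1 - x' ∈ Icc x (1 - x) := ⟨by linarith, by linarith⟩
  have hg' := hasDerivAt_logJointDensity hpos hf (d := d) (y := x') (by nlinarith) (by nlinarith)
  have hslope := hg.add_abs_mul_le_of_hasDerivAt ⟨le_rfl, by linarith⟩ hx'S hzS hxx'
    (by linarith) (logJointDensity_one_sub f d x').ge hg'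
  have hmid : logJointDensity f d x' ≤ logJointDensity f d y := by
    have := hg.ge_on_segment hx'S hzS (by rwa [segment_eq_Icc (by linarith)])
    rwa [logJointDensity_one_sub, min_self] at this
  rw [abs_mul, abs_of_pos hd, mul_comm] at hslope
  linarith

theorem stmt_14_general
    (f : ℝ → ℝ)
    (hpos : ∀ x, 0 ≤ x → 0 < f x)
    (hsmooth : ContDiffOn ℝ 2 f (Set.Ici (0 : ℝ)))
    (hint : ∀ d > (0 : ℝ),
      IntervalIntegrable (fun y => f (d * y) * f (d * (1 - y))) volume 0 1)
    (hlog : (∃ x₀ : ℝ, ∀ x > x₀, 0 < deriv (deriv (fun t => Real.log (f t))) x) ∨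
            (∃ x₀ : ℝ, ∀ x > x₀, deriv (deriv (fun t => Real.log (f t))) x < 0))
    (hratio : ∀ x ∈ Set.Ioo (0 : ℝ) (1 / 2),
      Filter.Tendsto
        (fun d => d * |deriv f (d * x) / f (d * x) -
          deriv f (d * (1 - x)) / f (d * (1 - x))|)
        Filter.atTop Filter.atTop)
    (fZ : ℝ → ℝ → ℝ)
    (hfZ : ∀ d x, fZ d x =
      f (d * x) * f (d * (1 - x)) / ∫ y in (0 : ℝ)..1, f (d * y) * f (d * (1 - y))) :
    ∀ x ∈ Set.Ioo (0 : ℝ) (1 / 2),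
      Filter.Tendsto (fun d => fZ d x) Filter.atTop (nhds 0) := by
  intro x hx
  obtain ⟨hx0, hx12⟩ := hx
  simp only [hfZ]
  have hf : DifferentiableOn ℝ f (Ioi 0) :=
    (hsmooth.mono Ioi_subset_Ici_self).differentiableOn (by norm_num)
  have hlarge : ∀ c s : ℝ, 0 < s → ∀ᶠ d in atTop, 0 < d ∧ c < d * s := fun c s hs =>
    (eventually_gt_atTop 0).and ((tendsto_id.atTop_mul_const hs).eventually_gt_atTop c)
  obtain ⟨c, hconv | hconc⟩ := exists_convexOn_or_concaveOn_log hpos hsmooth hlog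
  · refine tendsto_div_intervalIntegral_zero_of_gap hpos hint (a := x / 2) (b := 3 * x / 4)
      ⟨hx0.le, by linarith⟩ (by linarith) (by linarith) (by linarith)
      ((hratio x ⟨hx0, hx12⟩).const_mul_atTop (by linarith : 0 < x - 3 * x / 4)) ?_
    filter_upwards [hlarge c (x / 2) (by linarith)] with d ⟨hd, hc⟩ y hy
    exact logJointDensity_add_le_of_convexOn hpos hf hconv hd hc (by linarith) (by linarith) hx12 hy
  · obtain ⟨x', hxx', hx'⟩ : ∃ x', x < x' ∧ x' < 1 / 2 := exists_between hx12
    refine tendsto_div_intervalIntegral_zero_of_gap hpos hint (a := x') (b := 1 - x')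
      ⟨hx0.le, by linarith⟩ (by linarith) (by linarith) (by linarith)
      ((hratio x' ⟨by linarith, hx'⟩).const_mul_atTop (by linarith : 0 < x' - x)) ?_
    filter_upwards [hlarge c x hx0] with d ⟨hd, hc⟩ y hy
    exact logJointDensity_add_le_of_concaveOn hpos hf hconc hd hc hx0 hxx' hx' hy

/-- If `f` is eventually strictly log-convex or log-concave and
`d·|f'(dx)/f(dx) − f'(d(1−x))/f(d(1−x))| → ∞` for every `x ∈ (0,1/2)`, then
`f_{Z_d}(x) → 0` for every `x ∈ (0,1/2)`. -/
theorem stmt_14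
    (f : ℝ → ℝ)
    (hpos : ∀ x, 0 ≤ x → 0 < f x)
    (hsmooth : ContDiffOn ℝ 2 f (Set.Ici (0 : ℝ)))
    (hdens : ∫ x in Set.Ici (0 : ℝ), f x = 1)
    (hint : ∀ d > (0 : ℝ),
      IntervalIntegrable (fun y => f (d * y) * f (d * (1 - y))) volume 0 1)
    (hintpos : ∀ d > (0 : ℝ), 0 < ∫ y in (0 : ℝ)..1, f (d * y) * f (d * (1 - y)))
    (hlog : (∃ x₀ : ℝ, ∀ x > x₀, 0 < deriv (deriv (fun t => Real.log (f t))) x) ∨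
            (∃ x₀ : ℝ, ∀ x > x₀, deriv (deriv (fun t => Real.log (f t))) x < 0))
    (hratio : ∀ x ∈ Set.Ioo (0 : ℝ) (1 / 2),
      Filter.Tendsto
        (fun d => d * |deriv f (d * x) / f (d * x) -
          deriv f (d * (1 - x)) / f (d * (1 - x))|)
        Filter.atTop Filter.atTop)
    (fZ : ℝ → ℝ → ℝ)
    (hfZ : ∀ d x, fZ d x =
      f (d * x) * f (d * (1 - x)) / ∫ y in (0 : ℝ)..1, f (d * y) * f (d * (1 - y))) :
    ∀ x ∈ Set.Ioo (0 : ℝ) (1 / 2),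
      Filter.Tendsto (fun d => fZ d x) Filter.atTop (nhds 0) :=
  stmt_14_general f hpos hsmooth hint hlog hratio fZ hfZ
end

section
/- Let f_X(x) = C_X·exp(−x + √x) for x > 0, where C_X⁻¹ = ∫₀^∞ exp(−y + √y) dy, define f_{Z_d}(x) = f_X(dx)·f_X(d(1−x)) / ∫₀¹ f_X(dy)·f_X(d(1−y)) dy for x ∈ (0,1), and let μ_d be the probability measure on [0,1] with density f_{Z_d}. Then (d²/dx²) log f_X(x) = −(1/4)·x^{−3/2} < 0 for all x > 0, and for every x ∈ (0,1/2) one has d·( f_X'(dx)/f_X(dx) − f_X'(d(1−x))/f_X(d(1−x)) ) = (1/2)·√d·( x^{−1/2} − (1−x)^{−1/2} ) → ∞ as d → ∞, and consequently μ_d converges in distribution, as d → ∞, to the Dirac measure δ_{1/2} at the point 1/2. -/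
open MeasureTheory Real Filter Set Topology
open scoped ENNReal

/-!
Since `log f_X = log C_X - x + √x`, the log-derivative of `f_X` is `-1 + x^{-1/2}/2`;
differentiating once more, or evaluating it at `dx` and `d(1-x)`, gives the two explicit formulas.

For the limit, `f_X(dx) f_X(d(1-x)) = C_X² e^{-d} exp(√d · g x)` with `g x = √x + √(1-x)`, so
`f_{Z_d} = exp(√d g) / ∫₀¹ exp(√d g)`. As `(g x)² = 1 + 2√(1/4 - (x-1/2)²)`, `g` is strictly
decreasing in `|x - 1/2|`. Hence `g ≤ c₂` off the `ε`-ball around `1/2` and `g ≥ c₁ > c₂` on the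
`ε/2`-ball, which has length `ε`; so the mass of `μ_d` outside the `ε`-ball is at most
`exp(-√d (c₁ - c₂)) / ε → 0`, and the Portmanteau inequality for `δ_{1/2}` follows.
-/

section LogDerivative

variable {f φ : ℝ → ℝ} {C φ' x : ℝ}

theorem hasDerivAt_log_of_eventuallyEq_const_mul_exp (hC : C ≠ 0)
    (hf : f =ᶠ[𝓝 x] fun t => C * exp (φ t)) (hφ : HasDerivAt φ φ' x) :
    HasDerivAt (fun t => log (f t)) φ' x := by
  refine (hφ.const_add (log C)).congr_of_eventuallyEq ?_
  filter_upwards [hf] with t ht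
  rw [ht, log_mul hC (exp_ne_zero _), log_exp]

theorem deriv_div_self_of_eventuallyEq_const_mul_exp (hC : C ≠ 0)
    (hf : f =ᶠ[𝓝 x] fun t => C * exp (φ t)) (hφ : HasDerivAt φ φ' x) :
    deriv f x / f x = φ' := by
  rw [((hφ.exp.const_mul C).congr_of_eventuallyEq hf).deriv, hf.eq_of_nhds]
  field_simp

end LogDerivative

theorem hasDerivAt_neg_add_sqrt {t : ℝ} (ht : 0 < t) :
    HasDerivAt (fun s => -s + √s) (-1 + 1 / 2 * t ^ (-(1 / 2) : ℝ)) t := by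
  have h := (hasDerivAt_neg t).add (hasDerivAt_rpow_const (p := 1 / 2) (Or.inl ht.ne'))
  simp only [← sqrt_eq_rpow] at h
  norm_num at h ⊢
  exact h

theorem hasDerivAt_neg_one_add_half_mul_rpow {t : ℝ} (ht : 0 < t) :
    HasDerivAt (fun s => -1 + 1 / 2 * s ^ (-(1 / 2) : ℝ)) (-(1 / 4) * t ^ (-(3 / 2) : ℝ)) t := by
  refine (((hasDerivAt_rpow_const (Or.inl ht.ne')).const_mul (1 / 2)).const_add
    (-1)).congr_deriv ?_
  norm_num
  ring

section Density

variable {CX : ℝ} {fX : ℝ → ℝ} (hCX : CX ≠ 0) (hfX : ∀ x, 0 < x → fX x = CX * exp (-x + √x))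
include hCX hfX

theorem deriv_deriv_log_eq {x : ℝ} (hx : 0 < x) :
    deriv (deriv fun t => log (fX t)) x = -(1 / 4) * x ^ (-(3 / 2) : ℝ) := by
  have hderiv : deriv (fun t => log (fX t)) =ᶠ[𝓝 x] fun t => -1 + 1 / 2 * t ^ (-(1 / 2) : ℝ) := by
    filter_upwards [Ioi_mem_nhds hx] with t ht
    exact (hasDerivAt_log_of_eventuallyEq_const_mul_exp hCX
      (eventuallyEq_of_mem (Ioi_mem_nhds ht) hfX) (hasDerivAt_neg_add_sqrt ht)).deriv
  rw [hderiv.deriv_eq, (hasDerivAt_neg_one_add_half_mul_rpow hx).deriv]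

theorem deriv_div_self_eq {t : ℝ} (ht : 0 < t) :
    deriv fX t / fX t = -1 + 1 / 2 * t ^ (-(1 / 2) : ℝ) :=
  deriv_div_self_of_eventuallyEq_const_mul_exp hCX (eventuallyEq_of_mem (Ioi_mem_nhds ht) hfX)
    (hasDerivAt_neg_add_sqrt ht)

theorem mul_sub_deriv_div_self_eq {d x : ℝ} (hd : 0 < d) (hx : x ∈ Ioo (0 : ℝ) 1) :
    d * (deriv fX (d * x) / fX (d * x) - deriv fX (d * (1 - x)) / fX (d * (1 - x))) =
      1 / 2 * √d * (x ^ (-(1 / 2) : ℝ) - (1 - x) ^ (-(1 / 2) : ℝ)) := by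
  have hx' : 0 < 1 - x := sub_pos.2 hx.2
  have hsqrt : d * d ^ (-(1 / 2) : ℝ) = √d := by
    rw [sqrt_eq_rpow, ← rpow_one_add' hd.le (by norm_num)]
    norm_num
  rw [deriv_div_self_eq hCX hfX (mul_pos hd hx.1), deriv_div_self_eq hCX hfX (mul_pos hd hx'),
    mul_rpow hd.le hx.1.le, mul_rpow hd.le hx'.le, ← hsqrt]
  ring

theorem tendsto_mul_sub_deriv_div_self {x : ℝ} (hx : x ∈ Ioo (0 : ℝ) (1 / 2)) :
    Tendsto (fun d => d * (deriv fX (d * x) / fX (d * x) -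
      deriv fX (d * (1 - x)) / fX (d * (1 - x)))) atTop atTop := by
  have hpos : 0 < x ^ (-(1 / 2) : ℝ) - (1 - x) ^ (-(1 / 2) : ℝ) :=
    sub_pos.2 (rpow_lt_rpow_of_neg hx.1 (by linarith [hx.2]) (by norm_num))
  refine ((tendsto_sqrt_atTop.const_mul_atTop one_half_pos).atTop_mul_const hpos).congr' ?_
  filter_upwards [eventually_gt_atTop 0] with d hd
  exact (mul_sub_deriv_div_self_eq hCX hfX hd ⟨hx.1, by linarith [hx.2]⟩).symm

end Density

theorem integrableOn_exp_neg_add_sqrt : IntegrableOn (fun y => exp (-y + √y)) (Ioi 0) := by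
  refine ((exp_neg_integrableOn_Ioi 0 one_half_pos).const_mul (exp (1 / 2))).mono'
    (by fun_prop) ?_
  filter_upwards [ae_restrict_mem measurableSet_Ioi] with y hy
  rw [norm_of_nonneg (exp_pos _).le, ← exp_add]
  exact exp_le_exp.2 (by nlinarith [sq_nonneg (√y - 1), sq_sqrt (le_of_lt hy)])

theorem integral_exp_neg_add_sqrt_pos : 0 < ∫ y in Ioi 0, exp (-y + √y) := by
  have : NeZero (volume.restrict (Ioi (0 : ℝ))) := ⟨by simp⟩
  exact integral_exp_pos integrableOn_exp_neg_add_sqrt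

section Laplace

variable {g : ℝ → ℝ} {s a b u δ c₁ : ℝ}

theorem mul_exp_le_intervalIntegral_exp (hg : ContinuousOn g (Icc a b)) (hs : 0 ≤ s)
    (hδ : 0 ≤ δ) (hau : a ≤ u) (hub : u + δ ≤ b) (hc : ∀ x ∈ Icc u (u + δ), c₁ ≤ g x) :
    δ * exp (s * c₁) ≤ ∫ x in a..b, exp (s * g x) := by
  have hsub : Icc u (u + δ) ⊆ Icc a b := Icc_subset_Icc hau hub
  have hint : IntegrableOn (fun x => exp (s * g x)) (Icc a b) :=
    (continuous_exp.comp_continuousOn (hg.const_smul s)).integrableOn_Icc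
  rw [intervalIntegral.integral_of_le (by linarith), ← integral_Icc_eq_integral_Ioc]
  calc δ * exp (s * c₁) = exp (s * c₁) * volume.real (Icc u (u + δ)) := by
        simp [hδ, mul_comm]
    _ ≤ ∫ x in Icc u (u + δ), exp (s * g x) :=
        setIntegral_ge_of_const_le_real measurableSet_Icc measure_Icc_lt_top.ne
          (fun x hx => exp_le_exp.2 (mul_le_mul_of_nonneg_left (hc x hx) hs)) (hint.mono_set hsub)
    _ ≤ ∫ x in Icc a b, exp (s * g x) :=
        setIntegral_mono_set hint (ae_of_all _ fun x => (exp_pos _).le) hsub.eventuallyLE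

theorem exp_div_intervalIntegral_exp_le (hg : ContinuousOn g (Icc a b)) (hs : 0 ≤ s)
    (hδ : 0 < δ) (hau : a ≤ u) (hub : u + δ ≤ b) (hc : ∀ x ∈ Icc u (u + δ), c₁ ≤ g x)
    {x c₂ : ℝ} (hx : g x ≤ c₂) :
    exp (s * g x) / ∫ y in a..b, exp (s * g y) ≤ exp (s * (c₂ - c₁)) / δ := by
  calc exp (s * g x) / ∫ y in a..b, exp (s * g y)
      ≤ exp (s * c₂) / (δ * exp (s * c₁)) :=
        div_le_div₀ (exp_pos _).le (exp_le_exp.2 (mul_le_mul_of_nonneg_left hx hs))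
          (by positivity) (mul_exp_le_intervalIntegral_exp hg hs hδ.le hau hub hc)
    _ = exp (s * (c₂ - c₁)) / δ := by
        rw [mul_sub, exp_sub]
        field_simp

end Laplace

section SqrtAddSqrtOneSub

variable {x y : ℝ}

theorem sq_sqrt_add_sqrt_one_sub (hx : x ∈ Icc (0 : ℝ) 1) :
    (√x + √(1 - x)) ^ 2 = 1 + 2 * √(1 / 4 - (x - 1 / 2) ^ 2) := by
  have hx' : 0 ≤ 1 - x := sub_nonneg.2 hx.2
  rw [show 1 / 4 - (x - 1 / 2) ^ 2 = x * (1 - x) by ring, sqrt_mul hx.1, add_sq, sq_sqrt hx.1,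
    sq_sqrt hx']
  ring

theorem sqrt_add_sqrt_one_sub_le (hx : x ∈ Icc (0 : ℝ) 1) (hy : y ∈ Icc (0 : ℝ) 1)
    (h : |x - 1 / 2| ≤ |y - 1 / 2|) : √y + √(1 - y) ≤ √x + √(1 - x) := by
  rw [← pow_le_pow_iff_left₀ (by positivity) (by positivity) two_ne_zero,
    sq_sqrt_add_sqrt_one_sub hx, sq_sqrt_add_sqrt_one_sub hy]
  gcongr 1 + 2 * √(1 / 4 - ?_)
  exact sq_le_sq.2 h

theorem sqrt_add_sqrt_one_sub_lt (hx : x ∈ Icc (0 : ℝ) 1) (hy : y ∈ Icc (0 : ℝ) 1)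
    (h : |x - 1 / 2| < |y - 1 / 2|) : √y + √(1 - y) < √x + √(1 - x) := by
  rw [← pow_lt_pow_iff_left₀ (by positivity) (by positivity) two_ne_zero,
    sq_sqrt_add_sqrt_one_sub hx, sq_sqrt_add_sqrt_one_sub hy]
  have hy' : 0 ≤ 1 / 4 - (y - 1 / 2) ^ 2 := by nlinarith [hy.1, hy.2]
  gcongr 1 + 2 * ?_
  exact sqrt_lt_sqrt hy' (by linarith [sq_lt_sq.2 h])

end SqrtAddSqrtOneSub

theorem dirac_le_liminf_of_tendsto_measure_compl_ball {ι X : Type*} [PseudoMetricSpace X]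
    [MeasurableSpace X] [OpensMeasurableSpace X] {l : Filter ι} [l.NeBot] {μ : ι → Measure X}
    (hμ : ∀ᶠ i in l, IsProbabilityMeasure (μ i)) {x : X}
    (h : ∀ ε > 0, Tendsto (fun i => μ i (Metric.ball x ε)ᶜ) l (𝓝 0)) {A : Set X} (hA : IsOpen A) :
    Measure.dirac x A ≤ liminf (fun i => μ i A) l := by
  rw [Measure.dirac_apply' _ hA.measurableSet]
  by_cases hx : x ∈ A
  swap
  · simp [hx]
  obtain ⟨ε, hε, hball⟩ := Metric.isOpen_iff.1 hA x hx
  have hlim : Tendsto (fun i => 1 - μ i (Metric.ball x ε)ᶜ) l (𝓝 1) := by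
    simpa using ENNReal.Tendsto.sub tendsto_const_nhds (h ε hε) (Or.inl ENNReal.one_ne_top)
  rw [indicator_of_mem hx, Pi.one_apply, ← hlim.liminf_eq]
  refine liminf_le_liminf ?_
  filter_upwards [hμ] with i hi
  rw [← prob_compl_eq_one_sub Metric.isOpen_ball.measurableSet.compl, compl_compl]
  exact measure_mono hball

section ConditionalDensity

variable {CX : ℝ} {fX : ℝ → ℝ} {fZ : ℝ → ℝ → ℝ} {d : ℝ}

theorem joint_density_eq (hfX : ∀ x, 0 < x → fX x = CX * exp (-x + √x)) (hd : 0 < d) {x : ℝ}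
    (hx : x ∈ Ioo (0 : ℝ) 1) :
    fX (d * x) * fX (d * (1 - x)) = CX ^ 2 * exp (-d) * exp (√d * (√x + √(1 - x))) := by
  rw [hfX _ (mul_pos hd hx.1), hfX _ (mul_pos hd (sub_pos.2 hx.2)), sqrt_mul hd.le,
    sqrt_mul hd.le]
  calc _ = CX ^ 2 * (exp (-(d * x) + √d * √x) * exp (-(d * (1 - x)) + √d * √(1 - x))) := by ring
    _ = _ := by
      rw [← exp_add, mul_assoc, ← exp_add]
      ring_nf

theorem intervalIntegral_joint_density_eq (hfX : ∀ x, 0 < x → fX x = CX * exp (-x + √x))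
    (hd : 0 < d) :
    ∫ y in (0 : ℝ)..1, fX (d * y) * fX (d * (1 - y)) =
      CX ^ 2 * exp (-d) * ∫ y in (0 : ℝ)..1, exp (√d * (√y + √(1 - y))) := by
  rw [← intervalIntegral.integral_const_mul, intervalIntegral.integral_of_le zero_le_one,
    intervalIntegral.integral_of_le zero_le_one, integral_Ioc_eq_integral_Ioo,
    integral_Ioc_eq_integral_Ioo]
  exact setIntegral_congr_fun measurableSet_Ioo fun y hy => joint_density_eq hfX hd hy

variable (hCX : CX ≠ 0) (hfX : ∀ x, 0 < x → fX x = CX * exp (-x + √x))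
  (hfZ : ∀ d : ℝ, ∀ x ∈ Ioo (0 : ℝ) 1, fZ d x =
    fX (d * x) * fX (d * (1 - x)) / ∫ y in (0 : ℝ)..1, fX (d * y) * fX (d * (1 - y)))
include hCX hfX hfZ

theorem conditional_density_eq (hd : 0 < d) {x : ℝ} (hx : x ∈ Ioo (0 : ℝ) 1) :
    fZ d x = exp (√d * (√x + √(1 - x))) / ∫ y in (0 : ℝ)..1, exp (√d * (√y + √(1 - y))) := by
  rw [hfZ d x hx, joint_density_eq hfX hd hx, intervalIntegral_joint_density_eq hfX hd,
    mul_div_mul_left _ _ (by positivity)]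

theorem exists_conditional_density_le {ε : ℝ} (hε : 0 < ε) (hε' : ε ≤ 1 / 2) :
    ∃ c > 0, ∀ d > 0, ∀ x ∈ Ioo (0 : ℝ) 1, ε ≤ |x - 1 / 2| → fZ d x ≤ exp (-(c * √d)) / ε := by
  set g : ℝ → ℝ := fun x => √x + √(1 - x)
  have hg : ContinuousOn g (Icc 0 1) := by fun_prop
  have hmem : ∀ t : ℝ, 0 ≤ t → t ≤ 1 / 2 → 1 / 2 - t ∈ Icc (0 : ℝ) 1 := fun t h0 h1 =>
    ⟨by linarith, by linarith⟩
  have habs : ∀ t : ℝ, 0 ≤ t → |1 / 2 - t - 1 / 2| = t := fun t ht => by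
    rw [show 1 / 2 - t - 1 / 2 = -t by ring, abs_neg, abs_of_nonneg ht]
  refine ⟨g (1 / 2 - ε / 2) - g (1 / 2 - ε), sub_pos.2 ?_, fun d hd x hx hxε => ?_⟩
  · refine sqrt_add_sqrt_one_sub_lt (hmem _ (by positivity) (by linarith))
      (hmem _ hε.le hε') ?_
    rw [habs _ (by positivity), habs _ hε.le]
    linarith
  have hc : ∀ y ∈ Icc (1 / 2 - ε / 2) (1 / 2 - ε / 2 + ε), g (1 / 2 - ε / 2) ≤ g y :=
    fun y hy => sqrt_add_sqrt_one_sub_le ⟨by linarith [hy.1], by linarith [hy.2]⟩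
      (hmem _ (by positivity) (by linarith))
      (by
        rw [habs _ (by positivity)]
        exact abs_le.2 ⟨by linarith [hy.1], by linarith [hy.2]⟩)
  have hx' : g x ≤ g (1 / 2 - ε) := sqrt_add_sqrt_one_sub_le (hmem _ hε.le hε')
    ⟨hx.1.le, hx.2.le⟩ (by rwa [habs _ hε.le])
  rw [conditional_density_eq hCX hfX hfZ hd hx, show -(_ * √d) = √d * (g (1 / 2 - ε) -
    g (1 / 2 - ε / 2)) by ring]
  exact exp_div_intervalIntegral_exp_le hg (sqrt_nonneg d) hε (by linarith) (by linarith) hc hx'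

variable {μ : ℝ → Measure ℝ} (hμ : ∀ d, μ d = (volume.restrict (Icc (0 : ℝ) 1)).withDensity
  (fun x => ENNReal.ofReal (fZ d x)))
include hμ

theorem exists_measure_compl_ball_le {ε : ℝ} (hε : 0 < ε) (hε' : ε ≤ 1 / 2) :
    ∃ c > 0, ∀ d > 0,
      μ d (Metric.ball (1 / 2) ε)ᶜ ≤ ENNReal.ofReal (exp (-(c * √d)) / ε) := by
  obtain ⟨c, hc, hbound⟩ := exists_conditional_density_le hCX hfX hfZ hε hε'
  refine ⟨c, hc, fun d hd => ?_⟩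
  have hm : MeasurableSet (Metric.ball (1 / 2 : ℝ) ε)ᶜ := Metric.isOpen_ball.measurableSet.compl
  rw [hμ, Measure.restrict_congr_set Ioo_ae_eq_Icc.symm, withDensity_apply _ hm,
    Measure.restrict_restrict hm]
  calc ∫⁻ x in (Metric.ball (1 / 2) ε)ᶜ ∩ Ioo 0 1, ENNReal.ofReal (fZ d x)
      ≤ ∫⁻ _ in (Metric.ball (1 / 2) ε)ᶜ ∩ Ioo 0 1, ENNReal.ofReal (exp (-(c * √d)) / ε) :=
        setLIntegral_mono measurable_const fun x hx => ENNReal.ofReal_le_ofReal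
          (hbound d hd x hx.2 (by simpa [Real.dist_eq] using hx.1))
    _ = ENNReal.ofReal (exp (-(c * √d)) / ε) * volume ((Metric.ball (1 / 2) ε)ᶜ ∩ Ioo 0 1) :=
        setLIntegral_const _ _
    _ ≤ ENNReal.ofReal (exp (-(c * √d)) / ε) * 1 := by
        gcongr
        exact (measure_mono inter_subset_right).trans (by simp)
    _ = _ := mul_one _

theorem tendsto_measure_compl_ball {ε : ℝ} (hε : 0 < ε) :
    Tendsto (fun d => μ d (Metric.ball (1 / 2) ε)ᶜ) atTop (𝓝 0) := by
  obtain ⟨c, hc, hbound⟩ :=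
    exists_measure_compl_ball_le hCX hfX hfZ hμ (lt_min hε one_half_pos) (min_le_right ε _)
  have hlim : Tendsto (fun d => ENNReal.ofReal (exp (-(c * √d)) / min ε (1 / 2))) atTop (𝓝 0) := by
    simpa using ENNReal.tendsto_ofReal ((tendsto_exp_atBot.comp (tendsto_neg_atTop_atBot.comp
      (tendsto_sqrt_atTop.const_mul_atTop hc))).div_const (min ε (1 / 2)))
  refine tendsto_of_tendsto_of_tendsto_of_le_of_le' tendsto_const_nhds hlim
    (Eventually.of_forall fun _ => zero_le) ?_
  filter_upwards [eventually_gt_atTop 0] with d hd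
  exact (measure_mono (compl_subset_compl.2 (Metric.ball_subset_ball (min_le_left _ _)))).trans
    (hbound d hd)

end ConditionalDensity

/-- For `f_X(x) = C_X·exp(−x+√x)`: `(log f_X)''(x) = −(1/4)x^{−3/2} < 0`,
`d·(f_X'(dx)/f_X(dx) − f_X'(d(1−x))/f_X(d(1−x))) = (1/2)√d·(x^{−1/2} − (1−x)^{−1/2}) → ∞`
for `x ∈ (0,1/2)`, and `μ_d → δ_{1/2}` in distribution. -/
theorem stmt_16
    (CX : ℝ)
    (hCX : CX = (∫ y in Set.Ioi (0 : ℝ), Real.exp (-y + Real.sqrt y))⁻¹)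
    (fX : ℝ → ℝ)
    (hfX : ∀ x, 0 < x → fX x = CX * Real.exp (-x + Real.sqrt x))
    (fZ : ℝ → ℝ → ℝ)
    (hfZ : ∀ d : ℝ, ∀ x ∈ Set.Ioo (0 : ℝ) 1, fZ d x =
      fX (d * x) * fX (d * (1 - x)) / ∫ y in (0 : ℝ)..1, fX (d * y) * fX (d * (1 - y)))
    (μ : ℝ → Measure ℝ)
    (hμ : ∀ d, μ d = (volume.restrict (Set.Icc (0 : ℝ) 1)).withDensity
      (fun x => ENNReal.ofReal (fZ d x)))
    (hprob : ∀ d > (0 : ℝ), IsProbabilityMeasure (μ d)) :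
    (∀ x > (0 : ℝ),
      deriv (deriv (fun t => Real.log (fX t))) x = -(1 / 4) * x ^ (-(3 / 2) : ℝ) ∧
      deriv (deriv (fun t => Real.log (fX t))) x < 0) ∧
    (∀ x ∈ Set.Ioo (0 : ℝ) (1 / 2),
      (∀ d > (0 : ℝ),
        d * (deriv fX (d * x) / fX (d * x) - deriv fX (d * (1 - x)) / fX (d * (1 - x))) =
          (1 / 2) * Real.sqrt d * (x ^ (-(1 / 2) : ℝ) - (1 - x) ^ (-(1 / 2) : ℝ))) ∧
      Filter.Tendsto
        (fun d => d * (deriv fX (d * x) / fX (d * x) -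
          deriv fX (d * (1 - x)) / fX (d * (1 - x))))
        Filter.atTop Filter.atTop) ∧
    (∀ A : Set ℝ, IsOpen A →
      Measure.dirac (1 / 2 : ℝ) A ≤ Filter.liminf (fun d => μ d A) Filter.atTop) := by
  have hCX0 : CX ≠ 0 := hCX ▸ (inv_pos.2 integral_exp_neg_add_sqrt_pos).ne'
  refine ⟨fun x hx => ⟨deriv_deriv_log_eq hCX0 hfX hx, ?_⟩, fun x hx => ⟨fun d hd => ?_,
    tendsto_mul_sub_deriv_div_self hCX0 hfX hx⟩, fun A hA => ?_⟩
  · rw [deriv_deriv_log_eq hCX0 hfX hx]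
    have := rpow_pos_of_pos hx (-(3 / 2))
    linarith
  · exact mul_sub_deriv_div_self_eq hCX0 hfX hd ⟨hx.1, by linarith [hx.2]⟩
  · exact dirac_le_liminf_of_tendsto_measure_compl_ball
      ((eventually_gt_atTop 0).mono hprob)
      (fun ε hε => tendsto_measure_compl_ball hCX0 hfX hfZ hμ hε) hA
end
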